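/- arXiv:gr-qc/0306038 — 12 statements merged into one kernel-verified Lean document; each statement's English description precedes it below -/
import Mathlib

section
/- If m : [0,R] → ℝ is differentiable with m(r) = ∫₀^r 4πρ(s)s² ds for a nonnegative density ρ, and the average density ρ̄(r) = 3m(r)/(4πr³) is nonincreasing on (0,R], then the function r ↦ p(r) + (3/(8π))·m(r)²/r⁴ is nonincreasing on (0,R], where p satisfies the Newtonian hydrostatic equation p'(r) = -ρ(r)m(r)/r². -/
open Real Set MeasureTheory Filter Metric

/-- If `g` is antitone on `Ioc 0 R` and has a derivative at an interior point, the
derivative is nonpositive. -/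
lemma aux_deriv_nonpos_of_antitoneOn {R : ℝ} {g : ℝ → ℝ} {r c : ℝ}
    (hg : AntitoneOn g (Ioc 0 R)) (hr : r ∈ Ioo (0:ℝ) R) (hc : HasDerivAt g c r) : c ≤ 0 := by
  have h1 : Filter.Tendsto (slope g r) (nhdsWithin r (Ioi r)) (nhds c) :=
    (hasDerivAt_iff_tendsto_slope.1 hc).mono_left
      (nhdsWithin_mono _ (fun y hy => ne_of_gt hy))
  refine le_of_tendsto h1 ?_
  filter_upwards [Ioo_mem_nhdsGT_of_mem ⟨le_refl r, hr.2⟩] with y hy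
  have hmono : g y ≤ g r :=
    hg ⟨hr.1, hr.2.le⟩ ⟨hr.1.trans hy.1, hy.2.le⟩ hy.1.le
  rw [slope_def_field]
  exact div_nonpos_of_nonpos_of_nonneg (sub_nonpos.2 hmono) (sub_pos.2 hy.1).le

/-- Lebesgue differentiation for the indefinite integral of an integrable function. -/
lemma aux_ae_hasDerivAt_intervalIntegral {f : ℝ → ℝ} (hf : Integrable f) :
    ∀ᵐ x : ℝ, HasDerivAt (fun r => ∫ s in (0:ℝ)..r, f s) (f x) x := by
  filter_upwards [IsUnifLocDoublingMeasure.ae_tendsto_average (μ := volume)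
    hf.locallyIntegrable 1] with x hx
  rw [hasDerivAt_iff_tendsto_slope]
  have hδ : Tendsto (fun y : ℝ => |y - x| / 2) (nhdsWithin x {x}ᶜ) (nhdsWithin 0 (Ioi 0)) := by
    apply tendsto_nhdsWithin_of_tendsto_nhds_of_eventually_within
    · have h0 : Tendsto (fun y : ℝ => |y - x| / 2) (nhds x) (nhds (|x - x| / 2)) :=
        (((continuous_id.sub continuous_const).abs).div_const 2).tendsto x
      simpa using h0.mono_left nhdsWithin_le_nhds
    · filter_upwards [self_mem_nhdsWithin] with y hy
      have : y - x ≠ 0 := sub_ne_zero.2 hy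
      have : 0 < |y - x| := abs_pos.2 this
      simpa using by positivity
  have hmem : ∀ᶠ y in nhdsWithin x {x}ᶜ,
      x ∈ Metric.closedBall ((x + y) / 2) (1 * (|y - x| / 2)) := by
    apply Filter.Eventually.of_forall
    intro y
    simp only [Metric.mem_closedBall, Real.dist_eq, one_mul]
    rw [abs_sub_comm y x]
    rw [show x - (x + y) / 2 = (x - y) / 2 by ring, abs_div]
    simp [abs_of_nonneg, le_refl]
  have H := hx (fun y => (x + y) / 2) (fun y => |y - x| / 2) hδ hmem
  refine H.congr' ?_
  filter_upwards [self_mem_nhdsWithin] with y hy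
  have hfi : ∀ a b : ℝ, IntervalIntegrable f volume a b := fun a b => hf.intervalIntegrable
  have hFsub : (∫ s in (0:ℝ)..y, f s) - (∫ s in (0:ℝ)..x, f s) = ∫ s in x..y, f s :=
    intervalIntegral.integral_interval_sub_left (hfi 0 y) (hfi 0 x)
  rcases lt_or_gt_of_ne (hy : y ≠ x) with hlt | hgt
  · -- y < x
    have hball : Metric.closedBall ((x + y) / 2) (|y - x| / 2) = Icc y x := by
      rw [Real.closedBall_eq_Icc, abs_of_nonpos (by linarith)]
      congr 1 <;> ring
    rw [hball, setAverage_eq, slope_def_field, hFsub]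
    rw [MeasureTheory.integral_Icc_eq_integral_Ioc, Real.volume_real_Icc_of_le (by linarith)]
    rw [intervalIntegral.integral_symm, intervalIntegral.integral_of_le hlt.le]
    rw [smul_eq_mul]
    field_simp
    rw [show y - x = -(x - y) by ring, div_neg, neg_neg, mul_div_cancel_left₀ _ (sub_ne_zero.2 hlt.ne')]
  · -- x < y
    have hball : Metric.closedBall ((x + y) / 2) (|y - x| / 2) = Icc x y := by
      rw [Real.closedBall_eq_Icc, abs_of_nonneg (by linarith)]
      congr 1 <;> ring
    rw [hball, setAverage_eq, slope_def_field, hFsub]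
    rw [MeasureTheory.integral_Icc_eq_integral_Ioc, Real.volume_real_Icc_of_le (by linarith)]
    rw [intervalIntegral.integral_of_le hgt.le]
    rw [smul_eq_mul]
    field_simp

/-- Newtonian pressure monotonicity: if the average density is nonincreasing,
then `p(r) + (3/(8π)) m(r)²/r⁴` is nonincreasing on `(0,R]`. -/
theorem newtonian_pressure_monotone
    (R : ℝ) (hR : 0 < R) (m ρ p : ℝ → ℝ)
    (hρ : ∀ s ∈ Icc (0:ℝ) R, 0 ≤ ρ s)
    (hm : ∀ r ∈ Icc (0:ℝ) R, m r = ∫ s in (0:ℝ)..r, 4 * π * ρ s * s ^ 2)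
    (hmdiff : DifferentiableOn ℝ m (Icc 0 R))
    (havg : AntitoneOn (fun r => 3 * m r / (4 * π * r ^ 3)) (Ioc 0 R))
    (hp : ∀ r ∈ Ioc (0:ℝ) R, HasDerivAt p (-(ρ r * m r) / r ^ 2) r) :
    AntitoneOn (fun r => p r + (3 / (8 * π)) * (m r) ^ 2 / r ^ 4) (Ioc 0 R) := by
  have hπ : (0:ℝ) < π := Real.pi_pos
  set f₀ : ℝ → ℝ := fun s => 4 * π * ρ s * s ^ 2 with hf₀def
  have hm0 : ∀ r ∈ Icc (0:ℝ) R, 0 ≤ m r := by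
    intro r hr
    rw [hm r hr]
    apply intervalIntegral.integral_nonneg hr.1
    intro u hu
    have hρu := hρ u ⟨hu.1, hu.2.trans hr.2⟩
    positivity
  intro x hx y hy hxy
  simp only
  by_cases hint : IntervalIntegrable f₀ volume 0 y
  · -- integrable case
    have hx0 : 0 < x := hx.1
    have hy0 : 0 < y := hy.1
    have hyR : y ≤ R := hy.2
    have hsubIoc : Icc x y ⊆ Ioc 0 R := fun r hr => ⟨hx0.trans_le hr.1, hr.2.trans hyR⟩
    -- the candidate derivative
    set q' : ℝ → ℝ := fun r =>
      -(ρ r * m r) / r ^ 2 + 3 / (4 * π) * m r * deriv m r / r ^ 4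
        - 3 / (2 * π) * (m r) ^ 2 / r ^ 5 with hq'def
    set G : ℝ → ℝ := fun r => f₀ r * (m r / (2 * π * r ^ 4)) - 3 / (2 * π) * (m r) ^ 2 / r ^ 5
      with hGdef
    -- m has derivative deriv m at interior points
    have hmderiv : ∀ r ∈ Ioo x y, HasDerivAt m (deriv m r) r := by
      intro r hr
      have hnb : Icc (0:ℝ) R ∈ nhds r :=
        Icc_mem_nhds (hx0.trans hr.1) (lt_of_lt_of_le hr.2 hyR)
      exact (hmdiff.differentiableAt hnb).hasDerivAt
    -- a.e. the derivative of m equals f₀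
    have hae : ∀ᵐ r : ℝ, r ∈ Ioo x y → deriv m r = f₀ r := by
      have hIoc : IntegrableOn f₀ (Ioc 0 y) :=
        (intervalIntegrable_iff_integrableOn_Ioc_of_le hy0.le).1 hint
      have hf₁ : Integrable ((Ioc (0:ℝ) y).indicator f₀) :=
        (integrable_indicator_iff measurableSet_Ioc).2 hIoc
      filter_upwards [aux_ae_hasDerivAt_intervalIntegral hf₁] with r hr hrmem
      have hF₁eq : (fun t => ∫ s in (0:ℝ)..t, (Ioc (0:ℝ) y).indicator f₀ s) =ᶠ[nhds r] m := by
        have hnb : Ioo (0:ℝ) y ∈ nhds r := Ioo_mem_nhds (hx0.trans hrmem.1) hrmem.2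
        filter_upwards [hnb] with t ht
        have ht0 : (0:ℝ) ≤ t := ht.1.le
        show (∫ s in (0:ℝ)..t, (Ioc (0:ℝ) y).indicator f₀ s) = m t
        rw [hm t ⟨ht0, ht.2.le.trans hyR⟩, intervalIntegral.integral_of_le ht0,
          intervalIntegral.integral_of_le ht0,
          MeasureTheory.setIntegral_indicator measurableSet_Ioc,
          Set.inter_eq_self_of_subset_left (Ioc_subset_Ioc le_rfl ht.2.le)]
      have h2 : HasDerivAt m ((Ioc (0:ℝ) y).indicator f₀ r) r := hr.congr_of_eventuallyEq hF₁eq.symm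
      rw [h2.deriv, Set.indicator_of_mem (show r ∈ Ioc (0:ℝ) y from ⟨hx0.trans hrmem.1, hrmem.2.le⟩)]
    -- the average-density bound : deriv m r * r ≤ 3 m r
    have hD3 : ∀ r ∈ Ioo x y, deriv m r * r ≤ 3 * m r := by
      intro r hr
      have hr0 : 0 < r := hx0.trans hr.1
      have hrR : r < R := lt_of_lt_of_le hr.2 hyR
      have hden : (0:ℝ) < 4 * π * r ^ 3 := by positivity
      have havgd : HasDerivAt (fun u => 3 * m u / (4 * π * u ^ 3))
          ((3 * deriv m r * (4 * π * r ^ 3) - 3 * m r * (4 * π * ((3:ℕ) * r ^ 2)))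
            / (4 * π * r ^ 3) ^ 2) r := by
        have h1 : HasDerivAt (fun u => 3 * m u) (3 * deriv m r) r :=
          (hmderiv r hr).const_mul 3
        have h2 : HasDerivAt (fun u : ℝ => 4 * π * u ^ 3) (4 * π * ((3:ℕ) * r ^ 2)) r := by
          simpa using (hasDerivAt_pow 3 r).const_mul (4 * π)
        exact h1.div h2 (ne_of_gt hden)
      have hc := aux_deriv_nonpos_of_antitoneOn havg ⟨hr0, hrR⟩ havgd
      have hnum : 3 * deriv m r * (4 * π * r ^ 3) - 3 * m r * (4 * π * ((3:ℕ) * r ^ 2)) ≤ 0 := by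
        rcases div_nonpos_iff.1 hc with h | h
        · nlinarith [h.2, sq_nonneg (4 * π * r ^ 3), hden]
        · exact h.1
      have h12 : (0:ℝ) < 12 * π * r ^ 2 := by positivity
      have hkey : 12 * π * r ^ 2 * (deriv m r * r) ≤ 12 * π * r ^ 2 * (3 * m r) := by
        push_cast at hnum
        nlinarith [hnum]
      exact le_of_mul_le_mul_left hkey h12
    -- a.e. equality of q' and G on (x, y]
    have haeG : ∀ᵐ r ∂(volume.restrict (Ioc x y)), G r = q' r := by
      rw [← Measure.restrict_congr_set Ioo_ae_eq_Ioc]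
      rw [ae_restrict_iff' measurableSet_Ioo]
      filter_upwards [hae] with r hD hr
      have hr0 : 0 < r := hx0.trans hr.1
      have hDr := hD hr
      rw [hq'def, hGdef]
      simp only
      rw [hDr, hf₀def]
      field_simp
      ring
    -- a.e. nonpositivity of q' on (x, y]
    have haenp : ∀ᵐ r ∂(volume.restrict (Ioc x y)), q' r ≤ 0 := by
      rw [← Measure.restrict_congr_set Ioo_ae_eq_Ioc]
      rw [ae_restrict_iff' measurableSet_Ioo]
      filter_upwards [hae] with r hD hr
      have hr0 : 0 < r := hx0.trans hr.1
      have hDr := hD hr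
      have hrmem : r ∈ Icc (0:ℝ) R := ⟨hr0.le, (hr.2.le.trans hyR)⟩
      have hmr := hm0 r hrmem
      have hρr := hρ r hrmem
      have h3 := hD3 r hr
      rw [hDr] at h3
      simp only [hf₀def] at h3
      -- h3 : 4 * π * ρ r * r ^ 2 * r ≤ 3 * m r
      have hq'eq : q' r = (4 * π * ρ r * r ^ 3 * m r - 3 * m r * m r) * (1 / (2 * π * r ^ 5)) := by
        rw [hq'def]
        simp only
        rw [hDr, hf₀def]
        field_simp
        ring
      rw [hq'eq]
      apply mul_nonpos_of_nonpos_of_nonneg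
      · nlinarith [mul_le_mul_of_nonneg_right h3 hmr]
      · positivity
    -- integrability of q'
    have hq'int : IntervalIntegrable q' volume x y := by
      have hmc : ContinuousOn m (Icc x y) :=
        hmdiff.continuousOn.mono (fun r hr => ⟨hx0.le.trans hr.1, hr.2.trans hyR⟩)
      have huIcc : uIcc x y = Icc x y := uIcc_of_le hxy
      have hφ : ContinuousOn (fun r => m r / (2 * π * r ^ 4)) (uIcc x y) := by
        rw [huIcc]
        apply hmc.div (by fun_prop)
        intro r hr
        have : 0 < r := hx0.trans_le hr.1
        positivity
      have hψ : IntervalIntegrable (fun r => 3 / (2 * π) * (m r) ^ 2 / r ^ 5) volume x y := by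
        apply ContinuousOn.intervalIntegrable
        rw [huIcc]
        apply ContinuousOn.div (by fun_prop) (by fun_prop)
        intro r hr
        have : 0 < r := hx0.trans_le hr.1
        positivity
      have hf₀xy : IntervalIntegrable f₀ volume x y := by
        apply hint.mono_set
        rw [huIcc, uIcc_of_le hy0.le]
        exact Icc_subset_Icc hx0.le le_rfl
      have hGint : IntervalIntegrable G volume x y := (hf₀xy.mul_continuousOn hφ).sub hψ
      rw [intervalIntegrable_iff_integrableOn_Ioc_of_le hxy] at hGint ⊢
      exact hGint.congr haeG
    -- continuity of q on [x, y]
    have hqcont : ContinuousOn (fun r => p r + 3 / (8 * π) * (m r) ^ 2 / r ^ 4) (Icc x y) := by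
      apply ContinuousOn.add
      · intro r hr
        exact ((hp r (hsubIoc hr)).continuousAt).continuousWithinAt
      · apply ContinuousOn.div
        · exact continuousOn_const.mul ((hmdiff.continuousOn.mono
            (fun r hr => ⟨hx0.le.trans hr.1, hr.2.trans hyR⟩)).pow 2)
        · fun_prop
        · intro r hr
          have : 0 < r := hx0.trans_le hr.1
          positivity
    -- derivative of q on (x, y)
    have hqderiv : ∀ r ∈ Ioo x y,
        HasDerivWithinAt (fun r => p r + 3 / (8 * π) * (m r) ^ 2 / r ^ 4) (q' r) (Ioi r) r := by
      intro r hr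
      have hr0 : 0 < r := hx0.trans hr.1
      have hD := hmderiv r hr
      have h1 : HasDerivAt (fun u => 3 / (8 * π) * (m u) ^ 2)
          (3 / (8 * π) * ((2:ℕ) * m r ^ 1 * deriv m r)) r := (hD.pow 2).const_mul _
      have h2 : HasDerivAt (fun u : ℝ => u ^ 4) ((4:ℕ) * r ^ 3) r := by
        simpa using hasDerivAt_pow 4 r
      have h3 := h1.div h2 (by positivity)
      have h4 := (hp r (hsubIoc ⟨hr.1.le, hr.2.le⟩)).add h3
      have : q' r = -(ρ r * m r) / r ^ 2 +
          (3 / (8 * π) * ((2:ℕ) * m r ^ 1 * deriv m r) * r ^ 4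
            - 3 / (8 * π) * m r ^ 2 * ((4:ℕ) * r ^ 3)) / (r ^ 4) ^ 2 := by
        rw [hq'def]
        push_cast
        field_simp
        ring
      rw [this]
      exact h4.hasDerivWithinAt
    -- FTC
    have heq := intervalIntegral.integral_eq_sub_of_hasDeriv_right_of_le hxy hqcont hqderiv hq'int
    have hle : (∫ r in x..y, q' r) ≤ 0 := by
      rw [intervalIntegral.integral_of_le hxy]
      exact integral_nonpos_of_ae haenp
    rw [heq] at hle
    linarith
  · -- non-integrable case : m y = 0 and p is antitone
    have hx0 : 0 < x := hx.1
    have hy0 : 0 < y := hy.1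
    have hyR : y ≤ R := hy.2
    have hsubIoc : Icc x y ⊆ Ioc 0 R := fun r hr => ⟨hx0.trans_le hr.1, hr.2.trans hyR⟩
    have hmy : m y = 0 := by
      rw [hm y ⟨hy0.le, hyR⟩]
      exact intervalIntegral.integral_undef hint
    have hpant : AntitoneOn p (Icc x y) := by
      apply antitoneOn_of_deriv_nonpos (convex_Icc x y)
      · intro r hr
        exact ((hp r (hsubIoc hr)).continuousAt).continuousWithinAt
      · intro r hr
        rw [interior_Icc] at hr
        exact ((hp r (hsubIoc ⟨hr.1.le, hr.2.le⟩)).differentiableAt).differentiableWithinAt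
      · intro r hr
        rw [interior_Icc] at hr
        have hrm : r ∈ Ioc 0 R := hsubIoc ⟨hr.1.le, hr.2.le⟩
        rw [(hp r hrm).deriv]
        have h1 := hρ r ⟨hrm.1.le, hrm.2⟩
        have h2 := hm0 r ⟨hrm.1.le, hrm.2⟩
        apply div_nonpos_of_nonpos_of_nonneg
        · simpa using mul_nonneg h1 h2
        · positivity
    have hple : p y ≤ p x := hpant ⟨le_refl x, hxy⟩ ⟨hxy, le_refl y⟩ hxy
    have hnn : 0 ≤ 3 / (8 * π) * (m x) ^ 2 / x ^ 4 := by positivity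
    have hqy : p y + 3 / (8 * π) * m y ^ 2 / y ^ 4 = p y := by rw [hmy]; ring
    rw [hqy]
    linarith
end

section
/- Under the hypotheses of the Newtonian pressure-monotonicity theorem (average density nonincreasing, p'(r) = -ρ(r)m(r)/r², p(R) ≥ 0), the central pressure satisfies p_c ≥ p(r) + (3/(8π))·m(r)²/r⁴ for all r ∈ (0,R], and in particular p_c ≥ (3/(8π))·M²/R⁴ where M = m(R). -/
/-!
Put `c = m(r)/r³`. Since the average density is nonincreasing, `m(s) ≥ c s³` for `s ≤ r`, so the
pressure drop `p(0) - p(r) = ∫₀ʳ ρ m / s² ds` is at least `c ∫₀ʳ ρ s ds = (c/4π) ∫₀ʳ dm(s) / s`.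
Writing `1/s = 1/r + ∫ₛʳ dt/t²` and swapping the integrals (Tonelli), the last integral becomes
`m(r)/r + ∫₀ʳ m(t)/t² dt ≥ c r² + c r²/2`, hence `p(0) - p(r) ≥ (3/(8π)) c² r² = (3/(8π)) m(r)²/r⁴`.
The integrals are taken in `ℝ≥0∞`, so nothing has to be checked about integrability at the centre.
-/

open Real Set MeasureTheory ENNReal

theorem lintegral_ofReal_eq_sub_of_hasDerivAt_of_nonneg {G g : ℝ → ℝ} {a b : ℝ} (hab : a ≤ b)
    (hcont : ContinuousOn G (Icc a b)) (hderiv : ∀ x ∈ Ioo a b, HasDerivAt G (g x) x)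
    (hg : ∀ x ∈ Ioo a b, 0 ≤ g x) :
    ∫⁻ x in Ioc a b, ENNReal.ofReal (g x) = ENNReal.ofReal (G b - G a) := by
  have hint := intervalIntegral.integrableOn_deriv_of_nonneg hcont hderiv hg
  have hg_ae : 0 ≤ᵐ[volume.restrict (Ioc a b)] g := by
    rw [← Measure.restrict_congr_set Ioo_ae_eq_Ioc]
    exact ae_restrict_of_forall_mem measurableSet_Ioo hg
  rw [← ofReal_integral_eq_lintegral_ofReal hint hg_ae, ← intervalIntegral.integral_of_le hab,
    intervalIntegral.integral_eq_sub_of_hasDerivAt_of_le hab hcont hderiv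
      ((intervalIntegrable_iff_integrableOn_Ioc_of_le hab).mpr hint)]

theorem lintegral_mul_lintegral_Icc_eq {f φ : ℝ → ℝ≥0∞} {a b : ℝ}
    (hf : AEMeasurable f (volume.restrict (Ioc a b)))
    (hφ : AEMeasurable φ (volume.restrict (Ioc a b))) :
    ∫⁻ s in Ioc a b, f s * ∫⁻ t in Icc s b, φ t =
      ∫⁻ t in Ioc a b, φ t * ∫⁻ s in Ioc a t, f s := by
  have hswap := lintegral_lintegral_swap (μ := volume.restrict (Ioc a b))
    (ν := volume.restrict (Ioc a b))
    (f := fun s t => {q : ℝ × ℝ | q.1 ≤ q.2}.indicator (fun q => f q.1 * φ q.2) (s, t))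
    ((hf.comp_fst.mul hφ.comp_snd).indicator (measurableSet_le measurable_fst measurable_snd))
  convert hswap using 1
  · refine setLIntegral_congr_fun measurableSet_Ioc fun s hs => ?_
    have hset : Ici s ∩ Ioc a b = Icc s b := by
      ext t
      simp only [mem_inter_iff, mem_Ici, mem_Ioc, mem_Icc]
      exact ⟨fun h => ⟨h.1, h.2.2⟩, fun h => ⟨h.1, hs.1.trans_le h.1, h.2⟩⟩
    rw [← lintegral_const_mul'' _ (hφ.mono_set (Icc_subset_Ioc hs.1 le_rfl)), ← hset,
      ← Measure.restrict_restrict measurableSet_Ici, ← lintegral_indicator measurableSet_Ici]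
    rfl
  · refine setLIntegral_congr_fun measurableSet_Ioc fun t ht => ?_
    have hset : Iic t ∩ Ioc a b = Ioc a t := by
      ext s
      simp only [mem_inter_iff, mem_Iic, mem_Ioc]
      exact ⟨fun h => ⟨h.2.1, h.1⟩, fun h => ⟨h.2, h.1, h.2.trans ht.2⟩⟩
    rw [← lintegral_const_mul'' _ (hf.mono_set (Ioc_subset_Ioc_right ht.2)), ← hset,
      ← Measure.restrict_restrict measurableSet_Iic, ← lintegral_indicator measurableSet_Iic]
    exact lintegral_congr fun s => by simp [indicator, mul_comm]

theorem lintegral_mul_inv_eq {F : ℝ → ℝ≥0∞} {a b : ℝ} (ha : 0 ≤ a)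
    (hF : AEMeasurable F (volume.restrict (Ioc a b))) :
    ∫⁻ s in Ioc a b, F s * ENNReal.ofReal s⁻¹ =
      ENNReal.ofReal b⁻¹ * (∫⁻ s in Ioc a b, F s) +
        ∫⁻ t in Ioc a b, ENNReal.ofReal (t ^ 2)⁻¹ * ∫⁻ s in Ioc a t, F s := by
  rw [← lintegral_mul_lintegral_Icc_eq hF (by fun_prop),
    ← lintegral_const_mul'' (ENNReal.ofReal b⁻¹) hF, ← lintegral_add_left' (hF.const_mul _)]
  refine setLIntegral_congr_fun measurableSet_Ioc fun s hs => ?_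
  have hs0 : 0 < s := ha.trans_lt hs.1
  have hinv : ∀ t ∈ Ioo s b, HasDerivAt (fun t => -t⁻¹) (t ^ 2)⁻¹ t := fun t ht => by
    simpa using (hasDerivAt_inv (hs0.trans ht.1).ne').fun_neg
  have hcont : ContinuousOn (fun t : ℝ => -t⁻¹) (Icc s b) :=
    (continuousOn_inv₀.mono fun t ht => (hs0.trans_le ht.1).ne').neg
  rw [← setLIntegral_congr Ioc_ae_eq_Icc, lintegral_ofReal_eq_sub_of_hasDerivAt_of_nonneg hs.2
    hcont hinv fun t _ => by positivity, mul_comm (F s), mul_comm (F s), ← add_mul,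
    ← ofReal_add (inv_nonneg.2 (hs0.le.trans hs.2))
      (sub_nonneg.2 (neg_le_neg (inv_anti₀ hs0 hs.2)))]
  congr 2
  ring

theorem ofReal_le_lintegral_mul_inv {F : ℝ → ℝ≥0∞} {c r : ℝ} (hr : 0 < r) (hc : 0 ≤ c)
    (hF : AEMeasurable F (volume.restrict (Ioc 0 r)))
    (hmass : ∀ t ∈ Ioc 0 r, ENNReal.ofReal (c * t ^ 3) ≤ ∫⁻ s in Ioc 0 t, F s) :
    ENNReal.ofReal (3 / 2 * c * r ^ 2) ≤ ∫⁻ s in Ioc 0 r, F s * ENNReal.ofReal s⁻¹ := by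
  have houter : ENNReal.ofReal (c * r ^ 2) ≤ ENNReal.ofReal r⁻¹ * ∫⁻ s in Ioc 0 r, F s := calc
    ENNReal.ofReal (c * r ^ 2) = ENNReal.ofReal r⁻¹ * ENNReal.ofReal (c * r ^ 3) := by
      rw [← ofReal_mul (by positivity)]; congr 1; field_simp
    _ ≤ _ := by gcongr; exact hmass r ⟨hr, le_rfl⟩
  have hinner : ENNReal.ofReal (c * r ^ 2 / 2) ≤
      ∫⁻ t in Ioc 0 r, ENNReal.ofReal (t ^ 2)⁻¹ * ∫⁻ s in Ioc 0 t, F s := calc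
    ENNReal.ofReal (c * r ^ 2 / 2) = ∫⁻ t in Ioc 0 r, ENNReal.ofReal (c * t) := by
      rw [lintegral_ofReal_eq_sub_of_hasDerivAt_of_nonneg (G := fun t => c * t ^ 2 / 2) hr.le
        (by fun_prop)
        (fun t _ => (((hasDerivAt_pow 2 t).const_mul c).div_const 2).congr_deriv (by ring))
        fun t ht => mul_nonneg hc ht.1.le]
      norm_num
    _ ≤ _ := setLIntegral_mono' measurableSet_Ioc fun t ht => calc
      ENNReal.ofReal (c * t) = ENNReal.ofReal (t ^ 2)⁻¹ * ENNReal.ofReal (c * t ^ 3) := by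
        rw [← ofReal_mul (by positivity)]; congr 1; field_simp [ht.1.ne']
      _ ≤ _ := by gcongr; exact hmass t ht
  rw [lintegral_mul_inv_eq le_rfl hF]
  calc ENNReal.ofReal (3 / 2 * c * r ^ 2)
      = ENNReal.ofReal (c * r ^ 2) + ENNReal.ofReal (c * r ^ 2 / 2) := by
        rw [← ofReal_add (by positivity) (by positivity)]; congr 1; ring
    _ ≤ _ := add_le_add houter hinner

section NewtonianStar

variable {R : ℝ} {m ρ p : ℝ → ℝ}

theorem mass_nonneg (hρ : ∀ s ∈ Icc (0:ℝ) R, 0 ≤ ρ s)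
    (hm : ∀ r ∈ Icc (0:ℝ) R, m r = ∫ s in (0:ℝ)..r, 4 * π * ρ s * s ^ 2)
    {r : ℝ} (hr : r ∈ Icc 0 R) : 0 ≤ m r := by
  rw [hm r hr]
  refine intervalIntegral.integral_nonneg hr.1 fun s hs => ?_
  have := hρ s ⟨hs.1, hs.2.trans hr.2⟩
  positivity

theorem mass_div_cube_mul_cube_le
    (havg : AntitoneOn (fun r => 3 * m r / (4 * π * r ^ 3)) (Ioc 0 R))
    {r s : ℝ} (hs : 0 < s) (hsr : s ≤ r) (hr : r ≤ R) : m r / r ^ 3 * s ^ 3 ≤ m s := by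
  have h := havg ⟨hs, hsr.trans hr⟩ ⟨hs.trans_le hsr, hr⟩ hsr
  have hr0 : 0 < r := hs.trans_le hsr
  simp only at h
  rw [div_le_div_iff₀ (by positivity) (by positivity)] at h
  rw [div_mul_eq_mul_div, div_le_iff₀ (by positivity)]
  nlinarith [pi_pos]

/-- A non-integrable integrand has integral `0`, so a nonzero mass forces integrability. -/
theorem intervalIntegrable_density_of_mass_ne_zero
    (hm : ∀ r ∈ Icc (0:ℝ) R, m r = ∫ s in (0:ℝ)..r, 4 * π * ρ s * s ^ 2)
    {r : ℝ} (hr : r ∈ Icc 0 R) (hmr : m r ≠ 0) :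
    IntervalIntegrable (fun s => 4 * π * ρ s * s ^ 2) volume 0 r := by
  by_contra h
  exact hmr ((hm r hr).trans (intervalIntegral.integral_undef h))

theorem ofReal_mass_eq_lintegral (hρ : ∀ s ∈ Icc (0:ℝ) R, 0 ≤ ρ s)
    (hm : ∀ r ∈ Icc (0:ℝ) R, m r = ∫ s in (0:ℝ)..r, 4 * π * ρ s * s ^ 2)
    {t : ℝ} (ht : t ∈ Ioc 0 R) (hf : IntegrableOn (fun s => 4 * π * ρ s * s ^ 2) (Ioc 0 t)) :
    ENNReal.ofReal (m t) = ∫⁻ s in Ioc 0 t, ENNReal.ofReal (4 * π * ρ s * s ^ 2) := by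
  have hf_nonneg : 0 ≤ᵐ[volume.restrict (Ioc 0 t)] fun s => 4 * π * ρ s * s ^ 2 :=
    ae_restrict_of_forall_mem measurableSet_Ioc fun s hs => by
      have := hρ s ⟨hs.1.le, hs.2.trans ht.2⟩
      positivity
  rw [← ofReal_integral_eq_lintegral_ofReal hf hf_nonneg, ← intervalIntegral.integral_of_le ht.1.le,
    ← hm t ⟨ht.1.le, ht.2⟩]

theorem pressure_gradient_nonneg (hρ : ∀ s ∈ Icc (0:ℝ) R, 0 ≤ ρ s)
    (hm : ∀ r ∈ Icc (0:ℝ) R, m r = ∫ s in (0:ℝ)..r, 4 * π * ρ s * s ^ 2)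
    {s : ℝ} (hs : s ∈ Icc 0 R) : 0 ≤ ρ s * m s / s ^ 2 := by
  have := hρ s hs
  have := mass_nonneg hρ hm hs
  positivity

theorem continuousOn_pressure (hp : ∀ r ∈ Ioc (0:ℝ) R, HasDerivAt p (-(ρ r * m r) / r ^ 2) r)
    (hpc : ContinuousWithinAt p (Icc 0 R) 0) {r : ℝ} (hr : r ≤ R) : ContinuousOn p (Icc 0 r) := by
  intro s hs
  rcases hs.1.eq_or_lt with rfl | hs0
  · exact hpc.mono (Icc_subset_Icc_right hr)
  · exact (hp s ⟨hs0, hs.2.trans hr⟩).continuousAt.continuousWithinAt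

theorem hasDerivAt_neg_pressure
    (hp : ∀ r ∈ Ioc (0:ℝ) R, HasDerivAt p (-(ρ r * m r) / r ^ 2) r) {s : ℝ} (hs : s ∈ Ioc 0 R) :
    HasDerivAt (-p) (ρ s * m s / s ^ 2) s := by
  simpa [neg_div] using (hp s hs).neg

theorem pressure_le_central (hρ : ∀ s ∈ Icc (0:ℝ) R, 0 ≤ ρ s)
    (hm : ∀ r ∈ Icc (0:ℝ) R, m r = ∫ s in (0:ℝ)..r, 4 * π * ρ s * s ^ 2)
    (hp : ∀ r ∈ Ioc (0:ℝ) R, HasDerivAt p (-(ρ r * m r) / r ^ 2) r)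
    (hpc : ContinuousWithinAt p (Icc 0 R) 0) {r : ℝ} (hr : r ∈ Ioc 0 R) : p r ≤ p 0 := by
  have hmono := monotoneOn_of_hasDerivWithinAt_nonneg (convex_Icc 0 r)
    (continuousOn_pressure hp hpc hr.2).neg (f' := fun s => ρ s * m s / s ^ 2)
    (by
      rw [interior_Icc]
      exact fun s hs => (hasDerivAt_neg_pressure hp ⟨hs.1, hs.2.le.trans hr.2⟩).hasDerivWithinAt)
    (by
      rw [interior_Icc]
      exact fun s hs => pressure_gradient_nonneg hρ hm ⟨hs.1.le, hs.2.le.trans hr.2⟩)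
  simpa using hmono ⟨le_rfl, hr.1.le⟩ ⟨hr.1.le, le_rfl⟩ hr.1.le

theorem lintegral_pressure_gradient (hρ : ∀ s ∈ Icc (0:ℝ) R, 0 ≤ ρ s)
    (hm : ∀ r ∈ Icc (0:ℝ) R, m r = ∫ s in (0:ℝ)..r, 4 * π * ρ s * s ^ 2)
    (hp : ∀ r ∈ Ioc (0:ℝ) R, HasDerivAt p (-(ρ r * m r) / r ^ 2) r)
    (hpc : ContinuousWithinAt p (Icc 0 R) 0) {r : ℝ} (hr : r ∈ Ioc 0 R) :
    ∫⁻ s in Ioc 0 r, ENNReal.ofReal (ρ s * m s / s ^ 2) = ENNReal.ofReal (p 0 - p r) := by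
  rw [lintegral_ofReal_eq_sub_of_hasDerivAt_of_nonneg hr.1.le
    (continuousOn_pressure hp hpc hr.2).neg
    (fun s hs => hasDerivAt_neg_pressure hp ⟨hs.1, hs.2.le.trans hr.2⟩)
    fun s hs => pressure_gradient_nonneg hρ hm ⟨hs.1.le, hs.2.le.trans hr.2⟩]
  simp only [Pi.neg_apply, neg_sub_neg]

theorem pressure_add_le_central (hρ : ∀ s ∈ Icc (0:ℝ) R, 0 ≤ ρ s)
    (hm : ∀ r ∈ Icc (0:ℝ) R, m r = ∫ s in (0:ℝ)..r, 4 * π * ρ s * s ^ 2)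
    (havg : AntitoneOn (fun r => 3 * m r / (4 * π * r ^ 3)) (Ioc 0 R))
    (hp : ∀ r ∈ Ioc (0:ℝ) R, HasDerivAt p (-(ρ r * m r) / r ^ 2) r)
    (hpc : ContinuousWithinAt p (Icc 0 R) 0) {r : ℝ} (hr : r ∈ Ioc 0 R) :
    p r + 3 / (8 * π) * m r ^ 2 / r ^ 4 ≤ p 0 := by
  have hpr := pressure_le_central hρ hm hp hpc hr
  rcases (mass_nonneg hρ hm (Ioc_subset_Icc_self hr)).eq_or_lt with hm0 | hmpos
  · simpa [← hm0] using hpr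
  set c := m r / r ^ 3
  have hc : 0 < c := div_pos hmpos (pow_pos hr.1 3)
  have hf := intervalIntegrable_density_of_mass_ne_zero hm (Ioc_subset_Icc_self hr) hmpos.ne'
  have hmass : ∀ t ∈ Ioc 0 r,
      ENNReal.ofReal (c * t ^ 3) ≤ ∫⁻ s in Ioc 0 t, ENNReal.ofReal (4 * π * ρ s * s ^ 2) :=
    fun t ht => by
      rw [← ofReal_mass_eq_lintegral hρ hm ⟨ht.1, ht.2.trans hr.2⟩
        (hf.1.mono_set (Ioc_subset_Ioc_right ht.2))]
      exact ofReal_le_ofReal (mass_div_cube_mul_cube_le havg ht.1 ht.2 hr.2)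
  have hbound := ofReal_le_lintegral_mul_inv hr.1 hc.le
    hf.1.aestronglyMeasurable.aemeasurable.ennreal_ofReal hmass
  rw [← le_sub_iff_add_le', ← ofReal_le_ofReal_iff (sub_nonneg.2 hpr),
    ← lintegral_pressure_gradient hρ hm hp hpc hr]
  calc ENNReal.ofReal (3 / (8 * π) * m r ^ 2 / r ^ 4)
      = ENNReal.ofReal (c / (4 * π)) * ENNReal.ofReal (3 / 2 * c * r ^ 2) := by
        rw [← ofReal_mul (by positivity)]
        have := hr.1.ne'
        congr 1
        simp only [c]
        field_simp
        ring
    _ ≤ ENNReal.ofReal (c / (4 * π)) *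
        ∫⁻ s in Ioc 0 r, ENNReal.ofReal (4 * π * ρ s * s ^ 2) * ENNReal.ofReal s⁻¹ := by gcongr
    _ = ∫⁻ s in Ioc 0 r, ENNReal.ofReal (c / (4 * π)) *
        (ENNReal.ofReal (4 * π * ρ s * s ^ 2) * ENNReal.ofReal s⁻¹) :=
      (lintegral_const_mul' _ _ ofReal_ne_top).symm
    _ ≤ ∫⁻ s in Ioc 0 r, ENNReal.ofReal (ρ s * m s / s ^ 2) := by
      refine setLIntegral_mono' measurableSet_Ioc fun s hs => ?_
      have := hρ s ⟨hs.1.le, hs.2.trans hr.2⟩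
      have := hs.1
      rw [← ofReal_mul (by positivity), ← ofReal_mul (by positivity)]
      refine ofReal_le_ofReal ?_
      calc c / (4 * π) * (4 * π * ρ s * s ^ 2 * s⁻¹) = ρ s * (c * s ^ 3) / s ^ 2 := by
            field_simp
        _ ≤ ρ s * m s / s ^ 2 := by gcongr; exact mass_div_cube_mul_cube_le havg hs.1 hs.2 hr.2

end NewtonianStar

theorem newtonian_central_pressure_bound_general
    (R : ℝ) (hR : 0 < R) (m ρ p : ℝ → ℝ)
    (hρ : ∀ s ∈ Icc (0:ℝ) R, 0 ≤ ρ s)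
    (hm : ∀ r ∈ Icc (0:ℝ) R, m r = ∫ s in (0:ℝ)..r, 4 * π * ρ s * s ^ 2)
    (havg : AntitoneOn (fun r => 3 * m r / (4 * π * r ^ 3)) (Ioc 0 R))
    (hp : ∀ r ∈ Ioc (0:ℝ) R, HasDerivAt p (-(ρ r * m r) / r ^ 2) r)
    (hpc : ContinuousWithinAt p (Icc 0 R) 0)
    (hpR : 0 ≤ p R) :
    (∀ r ∈ Ioc (0:ℝ) R, p 0 ≥ p r + (3 / (8 * π)) * (m r) ^ 2 / r ^ 4) ∧
      p 0 ≥ (3 / (8 * π)) * (m R) ^ 2 / R ^ 4 := by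
  have hcentral : ∀ r ∈ Ioc (0:ℝ) R, p 0 ≥ p r + (3 / (8 * π)) * (m r) ^ 2 / r ^ 4 :=
    fun r hr => pressure_add_le_central hρ hm havg hp hpc hr
  exact ⟨hcentral, by linarith [hcentral R ⟨hR, le_rfl⟩]⟩

/-- Corollary of Newtonian pressure monotonicity: the central pressure dominates
`p(r) + (3/(8π)) m(r)²/r⁴`, and in particular `p_c ≥ (3/(8π)) M²/R⁴`. -/
theorem newtonian_central_pressure_bound
    (R : ℝ) (hR : 0 < R) (m ρ p : ℝ → ℝ)
    (hρ : ∀ s ∈ Icc (0:ℝ) R, 0 ≤ ρ s)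
    (hm : ∀ r ∈ Icc (0:ℝ) R, m r = ∫ s in (0:ℝ)..r, 4 * π * ρ s * s ^ 2)
    (hmdiff : DifferentiableOn ℝ m (Icc 0 R))
    (havg : AntitoneOn (fun r => 3 * m r / (4 * π * r ^ 3)) (Ioc 0 R))
    (hp : ∀ r ∈ Ioc (0:ℝ) R, HasDerivAt p (-(ρ r * m r) / r ^ 2) r)
    (hpc : ContinuousWithinAt p (Icc 0 R) 0)
    (hpR : 0 ≤ p R) :
    (∀ r ∈ Ioc (0:ℝ) R, p 0 ≥ p r + (3 / (8 * π)) * (m r) ^ 2 / r ^ 4) ∧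
      p 0 ≥ (3 / (8 * π)) * (m R) ^ 2 / R ^ 4 :=
  newtonian_central_pressure_bound_general R hR m ρ p hρ hm havg hp hpc hpR
end

section
/- If p satisfies the TOV inequality p'(r) ≤ -ρ(r)m(r)/(r²(1 - 2m(r)/r)) on (0,R], with 2m(r)/r < 1 and the average density ρ̄(r) = 3m(r)/(4πr³) nonincreasing, then the function r ↦ p(r) - (3/(16π))·(m(r)/r³)·ln(1 - 2m(r)/r) is nonincreasing on (0,R]. -/
/-!
Write the function as `p - Q`. Since the average density is nonincreasing, `r m' ≤ 3m`; with
`log (1 - 2m/r) ≤ 0` this bounds `-Q'` by `m' ψ`, where `ψ = m / (4π r³ (r - 2m))`, while the TOV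
inequality reads `p' ≤ -4πρr² ψ`. Hence `(p - Q)' ≤ (m' - 4πρr²) ψ`, and the right-hand side
vanishes almost everywhere by Lebesgue's differentiation theorem. An everywhere differentiable
function whose derivative is bounded by an a.e. vanishing function is antitone, by the
fundamental theorem of calculus for upper bounds of derivatives.
-/

open Real Set MeasureTheory Topology

theorem antitoneOn_of_deriv_le_of_ae_eq_zero {D : Set ℝ} (hD : Convex ℝ D) {F φ : ℝ → ℝ}
    (hF : ContinuousOn F D) (hdiff : DifferentiableOn ℝ F (interior D))
    (hle : ∀ x ∈ interior D, deriv F x ≤ φ x) (hφ : ∀ᵐ x, x ∈ interior D → φ x = 0) :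
    AntitoneOn F D := by
  intro a ha b hb hab
  have hIcc : Icc a b ⊆ D := hD.ordConnected.out ha hb
  have hIoo : Ioo a b ⊆ interior D := by
    simpa only [interior_Icc] using interior_mono hIcc
  have hφ_ab : φ =ᵐ[volume.restrict (Icc a b)] 0 := by
    rw [Measure.restrict_congr_set Ioo_ae_eq_Icc.symm, Filter.EventuallyEq,
      ae_restrict_iff' measurableSet_Ioo]
    filter_upwards [hφ] with x hx hxab using hx (hIoo hxab)
  have hint : IntegrableOn φ (Icc a b) := (integrable_zero ℝ ℝ _).congr hφ_ab.symm
  have hzero : ∫ y in a..b, φ y = 0 := by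
    rw [intervalIntegral.integral_of_le hab,
      integral_congr_ae (ae_restrict_of_ae_restrict_of_subset Ioc_subset_Icc_self hφ_ab)]
    simp
  have := intervalIntegral.sub_le_integral_of_hasDeriv_right_of_le hab (hF.mono hIcc)
    (fun x hx => ((hdiff x (hIoo hx)).differentiableAt
      (isOpen_interior.mem_nhds (hIoo hx))).hasDerivAt.hasDerivWithinAt) hint
    (fun x hx => hle x (hIoo hx))
  linarith

/-- When `f` is not integrable up to `R`, `∫ s in 0..r, f s` is the junk value `0` for large `r`;
continuity and monotonicity of `m` then force `m` to vanish everywhere. -/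
theorem eqOn_zero_of_not_intervalIntegrable {f m : ℝ → ℝ} {R : ℝ}
    (hf : ∀ s ∈ Icc 0 R, 0 ≤ f s) (hm : ∀ r ∈ Icc 0 R, m r = ∫ s in 0..r, f s)
    (hcont : ContinuousOn m (Icc 0 R)) (hI : ¬ IntervalIntegrable f volume 0 R) :
    EqOn m 0 (Icc 0 R) := by
  have hm_nonneg : ∀ r ∈ Icc 0 R, 0 ≤ m r := fun r hr => (hm r hr).symm ▸
    intervalIntegral.integral_nonneg hr.1 fun s hs => hf s ⟨hs.1, hs.2.trans hr.2⟩
  have hint_of_ne : ∀ r ∈ Icc 0 R, m r ≠ 0 → IntervalIntegrable f volume 0 r :=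
    fun r hr hr0 => by_contra fun h => hr0 (by rw [hm r hr, intervalIntegral.integral_undef h])
  intro r hr
  by_contra hr0
  have hpos : 0 < m r := (hm_nonneg r hr).lt_of_ne' hr0
  have hmR : m R = 0 := by
    rw [hm R ⟨hr.1.trans hr.2, le_rfl⟩, intervalIntegral.integral_undef hI]
  -- by continuity `m` takes the value `m r / 2` beyond `r`, where it should be at least `m r`
  obtain ⟨t, ht, hmt⟩ : m r / 2 ∈ m '' Icc r R :=
    intermediate_value_Icc' hr.2 (hcont.mono (Icc_subset_Icc_left hr.1))
      ⟨by rw [hmR]; positivity, by linarith⟩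
  have htI : t ∈ Icc 0 R := ⟨hr.1.trans ht.1, ht.2⟩
  have hle : m r ≤ m t := by
    rw [hm r hr, hm t htI]
    refine intervalIntegral.integral_mono_interval le_rfl hr.1 ht.1 ?_
      (hint_of_ne t htI (by linarith))
    exact (ae_restrict_iff' measurableSet_Ioc).2 <| ae_of_all _ fun s hs =>
      hf s ⟨hs.1.le, hs.2.trans ht.2⟩
  linarith

theorem ae_deriv_eq_or_eq_zero_of_eq_integral {f m : ℝ → ℝ} {R : ℝ}
    (hf : ∀ s ∈ Icc 0 R, 0 ≤ f s) (hm : ∀ r ∈ Icc 0 R, m r = ∫ s in 0..r, f s)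
    (hcont : ContinuousOn m (Icc 0 R)) :
    ∀ᵐ x, x ∈ Ioo 0 R → deriv m x = f x ∨ m x = 0 := by
  by_cases hI : IntervalIntegrable f volume 0 R
  · filter_upwards [hI.ae_hasDerivAt_integral] with x hx hxR
    have hxR' : x ∈ uIcc 0 R := by
      rw [uIcc_of_le (hxR.1.le.trans hxR.2.le)]
      exact Ioo_subset_Icc_self hxR
    left
    refine ((hx hxR' 0 left_mem_uIcc).congr_of_eventuallyEq ?_).deriv
    filter_upwards [Icc_mem_nhds hxR.1 hxR.2] with y hy using hm y hy
  · exact ae_of_all _ fun x hx => Or.inr (eqOn_zero_of_not_intervalIntegrable hf hm hcont hI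
      (Ioo_subset_Icc_self hx))

theorem HasDerivAt.mul_le_of_antitoneOn_div_pow {m : ℝ → ℝ} {s : Set ℝ} {x D : ℝ} (n : ℕ)
    (hm : HasDerivAt m D x) (hx : 0 < x) (hs : s ∈ 𝓝 x)
    (hanti : AntitoneOn (fun r => m r / r ^ n) s) : D * x ≤ n * m x := by
  have hderiv := hm.fun_div (hasDerivAt_pow n x) (pow_pos hx n).ne'
  have hnonpos := hanti.derivWithin_nonpos (x := x)
  rw [derivWithin_of_mem_nhds hs, hderiv.deriv,
    div_le_iff₀ (by positivity), zero_mul, sub_nonpos] at hnonpos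
  cases n with
  | zero =>
    simp only [pow_zero, mul_one, Nat.cast_zero, zero_mul, mul_zero] at hnonpos ⊢
    exact mul_nonpos_of_nonpos_of_nonneg hnonpos hx.le
  | succ k =>
    simp only [add_tsub_cancel_right] at hnonpos
    refine le_of_mul_le_mul_right ?_ (pow_pos hx k)
    calc D * x * x ^ k = D * x ^ (k + 1) := by ring
      _ ≤ m x * ((k + 1 : ℕ) * x ^ k) := hnonpos
      _ = (k + 1 : ℕ) * m x * x ^ k := by ring

noncomputable def tovCorrection (m : ℝ → ℝ) (r : ℝ) : ℝ :=
  3 / (16 * π) * (m r / r ^ 3) * Real.log (1 - 2 * m r / r)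

theorem hasDerivAt_tovCorrection {m : ℝ → ℝ} {x D : ℝ} (hm : HasDerivAt m D x) (hx : x ≠ 0)
    (hgap : x - 2 * m x ≠ 0) :
    HasDerivAt (tovCorrection m)
      (3 / (16 * π) * ((D * x - 3 * m x) / x ^ 4 * Real.log (1 - 2 * m x / x)
        - 2 * m x * (D * x - m x) / (x ^ 4 * (x - 2 * m x)))) x := by
  have hlog_arg : 1 - 2 * m x / x ≠ 0 := by
    rw [one_sub_div hx]
    exact div_ne_zero hgap hx
  have hlog := (((hm.const_mul 2).fun_div (hasDerivAt_id' x) hx).const_sub 1).log hlog_arg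
  refine (((hm.fun_div (hasDerivAt_pow 3 x) (pow_ne_zero 3 hx)).const_mul
    (3 / (16 * π))).fun_mul hlog).congr_deriv ?_
  field_simp
  ring

theorem continuousOn_tovCorrection {m : ℝ → ℝ} {s : Set ℝ} (hm : ContinuousOn m s)
    (hs : ∀ r ∈ s, 0 < r) (hgap : ∀ r ∈ s, 2 * m r / r < 1) :
    ContinuousOn (tovCorrection m) s := by
  have hr : ∀ r ∈ s, r ≠ 0 := fun r hr => (hs r hr).ne'
  have hr3 : ∀ r ∈ s, r ^ 3 ≠ 0 := fun r hr => pow_ne_zero 3 (hs r hr).ne'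
  have hlog : ∀ r ∈ s, 1 - 2 * m r / r ≠ 0 := fun r hr => (sub_pos.2 (hgap r hr)).ne'
  unfold tovCorrection
  fun_prop (disch := assumption)

theorem neg_mul_le_tovCorrection_deriv {x A D L : ℝ} (hx : 0 < x) (hA : 0 ≤ A)
    (hgap : 2 * A < x) (hD : D * x ≤ 3 * A) (hL : L ≤ 0) :
    -(D * (A / (4 * π * x ^ 3 * (x - 2 * A)))) ≤
      3 / (16 * π) *
        ((D * x - 3 * A) / x ^ 4 * L - 2 * A * (D * x - A) / (x ^ 4 * (x - 2 * A))) := by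
  have hgap' : 0 < x - 2 * A := by linarith
  -- the logarithmic term has the right sign; the rest is exact up to `A (3A - Dx) ≥ 0`
  have hlog_term : 0 ≤ 3 / (16 * π) * ((D * x - 3 * A) / x ^ 4 * L) := by
    have : 0 ≤ (D * x - 3 * A) * L := mul_nonneg_of_nonpos_of_nonpos (by linarith) hL
    rw [div_mul_eq_mul_div (D * x - 3 * A)]
    exact mul_nonneg (by positivity) (div_nonneg this (by positivity))
  have hrest : 3 / (16 * π) * (2 * A * (D * x - A) / (x ^ 4 * (x - 2 * A)))
      - D * (A / (4 * π * x ^ 3 * (x - 2 * A)))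
        = -(A * (3 * A - D * x) / (8 * π * x ^ 4 * (x - 2 * A))) := by
    field_simp
    ring
  have : 0 ≤ A * (3 * A - D * x) / (8 * π * x ^ 4 * (x - 2 * A)) :=
    div_nonneg (mul_nonneg hA (by linarith)) (by positivity)
  linarith

theorem deriv_sub_tovCorrection_le {p m : ℝ → ℝ} {x D ρ : ℝ} (hx : 0 < x)
    (hp : DifferentiableAt ℝ p x) (hm : HasDerivAt m D x) (hm0 : 0 ≤ m x)
    (hgap : 2 * m x / x < 1) (havg : D * x ≤ 3 * m x)
    (htov : deriv p x ≤ -(ρ * m x) / (x ^ 2 * (1 - 2 * m x / x))) :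
    DifferentiableAt ℝ (fun r => p r - tovCorrection m r) x ∧
      deriv (fun r => p r - tovCorrection m r) x ≤
        (D - 4 * π * ρ * x ^ 2) * (m x / (4 * π * x ^ 3 * (x - 2 * m x))) := by
  have hgap' : 2 * m x < x := by rwa [div_lt_one hx] at hgap
  have hQ := hasDerivAt_tovCorrection hm hx.ne' (by linarith)
  have hF := hp.hasDerivAt.fun_sub hQ
  refine ⟨hF.differentiableAt, ?_⟩
  have hlog : Real.log (1 - 2 * m x / x) ≤ 0 :=
    Real.log_nonpos (by linarith) (by linarith [div_nonneg (by linarith : 0 ≤ 2 * m x) hx.le])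
  have hcorr := neg_mul_le_tovCorrection_deriv hx hm0 hgap' havg hlog
  have htov' : -(ρ * m x) / (x ^ 2 * (1 - 2 * m x / x))
      = -(4 * π * ρ * x ^ 2 * (m x / (4 * π * x ^ 3 * (x - 2 * m x)))) := by
    have : x - 2 * m x ≠ 0 := by linarith
    field_simp
  rw [hF.deriv]
  linarith

theorem tov_pressure_monotone_general
    (R : ℝ) (m ρ p : ℝ → ℝ)
    (hρ : ∀ s ∈ Icc (0:ℝ) R, 0 ≤ ρ s)
    (hm : ∀ r ∈ Icc (0:ℝ) R, m r = ∫ s in (0:ℝ)..r, 4 * π * ρ s * s ^ 2)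
    (hmdiff : DifferentiableOn ℝ m (Icc 0 R))
    (hcompact : ∀ r ∈ Ioc (0:ℝ) R, 2 * m r / r < 1)
    (havg : AntitoneOn (fun r => 3 * m r / (4 * π * r ^ 3)) (Ioc 0 R))
    (hpdiff : ∀ r ∈ Ioc (0:ℝ) R, DifferentiableAt ℝ p r)
    (htov : ∀ r ∈ Ioc (0:ℝ) R,
      deriv p r ≤ -(ρ r * m r) / (r ^ 2 * (1 - 2 * m r / r))) :
    AntitoneOn
      (fun r => p r - (3 / (16 * π)) * (m r / r ^ 3) * Real.log (1 - 2 * m r / r))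
      (Ioc 0 R) := by
  have hf : ∀ s ∈ Icc (0:ℝ) R, 0 ≤ 4 * π * ρ s * s ^ 2 := fun s hs => by
    have := hρ s hs
    positivity
  have hm0 : ∀ r ∈ Icc (0:ℝ) R, 0 ≤ m r := fun r hr => (hm r hr).symm ▸
    intervalIntegral.integral_nonneg hr.1 fun s hs => hf s ⟨hs.1, hs.2.trans hr.2⟩
  have havg' : AntitoneOn (fun r => m r / r ^ 3) (Ioc 0 R) := fun a ha b hb hab => by
    have := havg ha hb hab
    simp only [mul_div_mul_comm 3 (m _)] at this
    exact le_of_mul_le_mul_left this (by positivity)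
  have hbound : ∀ x ∈ Ioo 0 R, _ := fun x hx =>
    have hmx := (hmdiff.differentiableAt (Icc_mem_nhds hx.1 hx.2)).hasDerivAt
    deriv_sub_tovCorrection_le hx.1 (hpdiff x (Ioo_subset_Ioc_self hx)) hmx
      (hm0 x (Ioo_subset_Icc_self hx)) (hcompact x (Ioo_subset_Ioc_self hx))
      (by exact_mod_cast hmx.mul_le_of_antitoneOn_div_pow 3 hx.1 (Ioc_mem_nhds hx.1 hx.2) havg')
      (htov x (Ioo_subset_Ioc_self hx))
  refine antitoneOn_of_deriv_le_of_ae_eq_zero (convex_Ioc 0 R)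
    (φ := fun x => (deriv m x - 4 * π * ρ x * x ^ 2) * (m x / (4 * π * x ^ 3 * (x - 2 * m x))))
    ((continuousOn_of_forall_continuousAt fun r hr => (hpdiff r hr).continuousAt).sub
      (continuousOn_tovCorrection (hmdiff.continuousOn.mono Ioc_subset_Icc_self)
        (fun r hr => hr.1) hcompact))
    ?_ ?_ ?_ <;> rw [interior_Ioc]
  · exact fun x hx => (hbound x hx).1.differentiableWithinAt
  · exact fun x hx => (hbound x hx).2
  · filter_upwards [ae_deriv_eq_or_eq_zero_of_eq_integral hf hm hmdiff.continuousOn]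
      with x hx hxR
    rcases hx hxR with h | h <;> simp [h]

/-- Relativistic pressure monotonicity: under the TOV inequality and a
nonincreasing average density, `p(r) - (3/(16π)) (m(r)/r³) ln(1-2m(r)/r)`
is nonincreasing on `(0,R]`. -/
theorem tov_pressure_monotone
    (R : ℝ) (hR : 0 < R) (m ρ p : ℝ → ℝ)
    (hρ : ∀ s ∈ Icc (0:ℝ) R, 0 ≤ ρ s)
    (hppos : ∀ r ∈ Icc (0:ℝ) R, 0 ≤ p r)
    (hm : ∀ r ∈ Icc (0:ℝ) R, m r = ∫ s in (0:ℝ)..r, 4 * π * ρ s * s ^ 2)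
    (hmdiff : DifferentiableOn ℝ m (Icc 0 R))
    (hcompact : ∀ r ∈ Ioc (0:ℝ) R, 2 * m r / r < 1)
    (havg : AntitoneOn (fun r => 3 * m r / (4 * π * r ^ 3)) (Ioc 0 R))
    (hpdiff : ∀ r ∈ Ioc (0:ℝ) R, DifferentiableAt ℝ p r)
    (htov : ∀ r ∈ Ioc (0:ℝ) R,
      deriv p r ≤ -(ρ r * m r) / (r ^ 2 * (1 - 2 * m r / r))) :
    AntitoneOn
      (fun r => p r - (3 / (16 * π)) * (m r / r ^ 3) * Real.log (1 - 2 * m r / r))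
      (Ioc 0 R) :=
  tov_pressure_monotone_general R m ρ p hρ hm hmdiff hcompact havg hpdiff htov
end

section
/- Suppose ζ : (0,R] → ℝ is positive, twice differentiable, satisfies (d/dr)[(1/r)·√(1-2m(r)/r)·ζ'(r)] = (ζ(r)/√(1-2m(r)/r))·(d/dr)[m(r)/r³], with boundary conditions ζ(R) = √(1-2M/R), ζ'(R) = (M/R²)/√(1-2M/R), and that m(r)/r³ is nonincreasing with m(r) ≥ Mr³/R³ and 2m(r)/r < 1. Then for all r ∈ (0,R]: ζ(r) ≤ (1/2)[3√(1-2M/R) - √(1-2Mr²/R³)]. -/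
open Real Set Filter Topology

set_option maxHeartbeats 1600000 in
/-- Comparison theorem for the lapse: under the structural ODE and boundary
conditions, `ζ(r) ≤ ζ*(r) = (1/2)[3√(1-2M/R) - √(1-2Mr²/R³)]`. -/
theorem lapse_comparison
    (R M : ℝ) (hR : 0 < R) (m ζ : ℝ → ℝ) (hM : M = m R)
    (hζpos : ∀ r ∈ Ioc (0:ℝ) R, 0 < ζ r)
    (hζdiff : ∀ r ∈ Ioc (0:ℝ) R, DifferentiableAt ℝ ζ r ∧
      DifferentiableAt ℝ (deriv ζ) r)
    (hmdiff : ∀ r ∈ Ioc (0:ℝ) R, DifferentiableAt ℝ m r)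
    (hcompact : ∀ r ∈ Ioc (0:ℝ) R, 2 * m r / r < 1)
    (hmlow : ∀ r ∈ Ioc (0:ℝ) R, m r ≥ M * r ^ 3 / R ^ 3)
    (havg : AntitoneOn (fun r => m r / r ^ 3) (Ioc 0 R))
    (hode : ∀ r ∈ Ioc (0:ℝ) R,
      deriv (fun s => (1 / s) * Real.sqrt (1 - 2 * m s / s) * deriv ζ s) r =
        (ζ r / Real.sqrt (1 - 2 * m r / r)) * deriv (fun s => m s / s ^ 3) r)
    (hbdry : ζ R = Real.sqrt (1 - 2 * M / R))
    (hbdry' : deriv ζ R = (M / R ^ 2) / Real.sqrt (1 - 2 * M / R)) :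
    ∀ r ∈ Ioc (0:ℝ) R,
      ζ r ≤ (1 / 2) *
        (3 * Real.sqrt (1 - 2 * M / R) - Real.sqrt (1 - 2 * M * r ^ 2 / R ^ 3)) := by
  set A := Real.sqrt (1 - 2 * M / R) with hA
  set w : ℝ → ℝ := fun s => (1 / s) * Real.sqrt (1 - 2 * m s / s) * deriv ζ s with hw
  set g : ℝ → ℝ := fun s => m s / s ^ 3 with hg
  have hRIoc : R ∈ Ioc (0:ℝ) R := ⟨hR, le_refl R⟩
  have hmR : m R = M := hM.symm
  have hA2pos : 0 < 1 - 2 * M / R := by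
    have h1 := hcompact R hRIoc
    rw [hmR] at h1
    linarith
  have hApos : 0 < A := Real.sqrt_pos.2 hA2pos
  have hfpos : ∀ r ∈ Ioc (0:ℝ) R, 0 < 1 - 2 * m r / r := fun r hr => by
    linarith [hcompact r hr]
  have hsfpos : ∀ r ∈ Ioc (0:ℝ) R, 0 < Real.sqrt (1 - 2 * m r / r) := fun r hr =>
    Real.sqrt_pos.2 (hfpos r hr)
  have hR3 : (0:ℝ) < R ^ 3 := by positivity
  have hmlow' : ∀ r ∈ Ioc (0:ℝ) R, M * r ^ 3 ≤ m r * R ^ 3 := by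
    intro r hr
    have hml := hmlow r hr
    rw [ge_iff_le, div_le_iff₀ hR3] at hml
    linarith
  have hfle : ∀ r ∈ Ioc (0:ℝ) R, 1 - 2 * m r / r ≤ 1 - 2 * M * r ^ 2 / R ^ 3 := by
    intro r hr
    have hr0 : (0:ℝ) < r := hr.1
    have h1 := hmlow' r hr
    have h2 : 2 * M * r ^ 2 / R ^ 3 ≤ 2 * m r / r := by
      rw [div_le_div_iff₀ hR3 hr0]
      nlinarith
    linarith
  have hHpos : ∀ r ∈ Ioc (0:ℝ) R, 0 < 1 - 2 * M * r ^ 2 / R ^ 3 := fun r hr =>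
    lt_of_lt_of_le (hfpos r hr) (hfle r hr)
  -- value of w at R
  have hwR : w R = M / R ^ 3 := by
    have hfR : 1 - 2 * m R / R = 1 - 2 * M / R := by rw [hmR]
    simp only [hw]
    rw [hfR, hbdry', ← hA]
    field_simp
  -- differentiability of w
  have hwdiff : ∀ r ∈ Ioc (0:ℝ) R, DifferentiableAt ℝ w r := by
    intro r hr
    have hr0 : (0:ℝ) < r := hr.1
    have d1 : DifferentiableAt ℝ (fun s : ℝ => 1 / s) r :=
      (differentiableAt_const (1:ℝ)).div differentiableAt_id hr0.ne'
    have d2 : DifferentiableAt ℝ (fun s => 1 - 2 * m s / s) r :=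
      (differentiableAt_const (1:ℝ)).sub
        (((differentiableAt_const (2:ℝ)).mul (hmdiff r hr)).div differentiableAt_id hr0.ne')
    have d3 : DifferentiableAt ℝ (fun s => Real.sqrt (1 - 2 * m s / s)) r :=
      d2.sqrt (hfpos r hr).ne'
    exact (d1.mul d3).mul (hζdiff r hr).2
  -- differentiability of g
  have hgdiff : ∀ r ∈ Ioc (0:ℝ) R, DifferentiableAt ℝ g r := by
    intro r hr
    exact (hmdiff r hr).div (differentiableAt_id.pow 3) (pow_ne_zero 3 hr.1.ne')
  -- derivative of g is nonpositive on the interior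
  have hgderiv : ∀ r ∈ Ioo (0:ℝ) R, deriv g r ≤ 0 := by
    intro r hr
    have hd : DifferentiableAt ℝ g r := hgdiff r ⟨hr.1, hr.2.le⟩
    have h1 : Tendsto (slope g r) (𝓝[>] r) (𝓝 (deriv g r)) :=
      ((hasDerivAt_iff_tendsto_slope.1 hd.hasDerivAt).mono_left
        (nhdsWithin_mono _ (fun y hy => ne_of_gt hy)))
    refine le_of_tendsto h1 ?_
    filter_upwards [Ioo_mem_nhdsGT_of_mem ⟨le_refl r, hr.2⟩] with y hy
    rw [slope_def_field]
    have hgy : g y ≤ g r := havg ⟨hr.1, hr.2.le⟩ ⟨lt_trans hr.1 hy.1, hy.2.le⟩ hy.1.le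
    exact div_nonpos_iff.2 (Or.inr ⟨by linarith [hy.1], by linarith [hy.1]⟩)
  -- w is antitone
  have hwanti : AntitoneOn w (Ioc (0:ℝ) R) := by
    apply antitoneOn_of_deriv_nonpos (convex_Ioc 0 R)
    · exact fun r hr => (hwdiff r hr).continuousAt.continuousWithinAt
    · intro r hr
      rw [interior_Ioc] at hr
      exact (hwdiff r (Ioo_subset_Ioc_self hr)).differentiableWithinAt
    · intro r hr
      rw [interior_Ioc] at hr
      rw [hode r (Ioo_subset_Ioc_self hr)]
      have h1 : 0 ≤ ζ r / Real.sqrt (1 - 2 * m r / r) :=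
        div_nonneg (hζpos r (Ioo_subset_Ioc_self hr)).le (Real.sqrt_nonneg _)
      exact mul_nonpos_iff.2 (Or.inl ⟨h1, hgderiv r hr⟩)
  -- key pointwise derivative bound
  have hkey : ∀ r ∈ Ioc (0:ℝ) R,
      M * r / R ^ 3 ≤ Real.sqrt (1 - 2 * M * r ^ 2 / R ^ 3) * deriv ζ r := by
    intro r hr
    have hr0 : (0:ℝ) < r := hr.1
    have hsf : 0 < Real.sqrt (1 - 2 * m r / r) := hsfpos r hr
    have hH : 0 < Real.sqrt (1 - 2 * M * r ^ 2 / R ^ 3) := Real.sqrt_pos.2 (hHpos r hr)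
    have hsfH : Real.sqrt (1 - 2 * m r / r) ≤ Real.sqrt (1 - 2 * M * r ^ 2 / R ^ 3) :=
      Real.sqrt_le_sqrt (hfle r hr)
    have hwlb : M / R ^ 3 ≤ w r := by
      have := hwanti hr hRIoc hr.2
      rwa [hwR] at this
    have hzer : deriv ζ r = r * w r / Real.sqrt (1 - 2 * m r / r) := by
      obtain ⟨sf, hsfdef⟩ : ∃ sf, Real.sqrt (1 - 2 * m r / r) = sf := ⟨_, rfl⟩
      have hne : sf ≠ 0 := hsfdef ▸ hsf.ne'
      simp only [hw, hsfdef]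
      rw [eq_div_iff hne]
      field_simp
    have main : M / R ^ 3 * Real.sqrt (1 - 2 * m r / r) ≤
        Real.sqrt (1 - 2 * M * r ^ 2 / R ^ 3) * w r := by
      rcases le_or_gt 0 M with hM0 | hM0
      · have hw0 : (0:ℝ) ≤ w r := le_trans (div_nonneg (by linarith) hR3.le) hwlb
        nlinarith [mul_nonneg (sub_nonneg.2 hwlb) hsf.le,
          mul_nonneg hw0 (sub_nonneg.2 hsfH)]
      · have hμneg : M / R ^ 3 < 0 := div_neg_of_neg_of_pos hM0 hR3
        rcases le_or_gt 0 (w r) with hw0 | hw0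
        · have h1 : M / R ^ 3 * Real.sqrt (1 - 2 * m r / r) ≤ 0 :=
            mul_nonpos_iff.2 (Or.inr ⟨hμneg.le, hsf.le⟩)
          exact h1.trans (mul_nonneg hH.le hw0)
        · -- hard case : M < 0 and w r < 0
          have hIccsub : Icc r R ⊆ Ioc (0:ℝ) R := fun s hs =>
            ⟨lt_of_lt_of_le hr0 hs.1, hs.2⟩
          have hwneg : ∀ s ∈ Icc r R, w s < 0 := fun s hs =>
            lt_of_le_of_lt (hwanti hr (hIccsub hs) hs.1) hw0
          have hzder : ∀ s ∈ Icc r R, deriv ζ s ≤ 0 := by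
            intro s hs
            have hs' : s ∈ Ioc (0:ℝ) R := hIccsub hs
            have h1 : 0 < (1 / s) * Real.sqrt (1 - 2 * m s / s) :=
              mul_pos (one_div_pos.2 hs'.1) (hsfpos s hs')
            have h2 := hwneg s hs
            simp only [hw] at h2
            by_contra hc
            push_neg at hc
            nlinarith [mul_pos h1 hc]
          have hzanti : AntitoneOn ζ (Icc r R) := by
            apply antitoneOn_of_deriv_nonpos (convex_Icc r R)
            · exact fun s hs => (hζdiff s (hIccsub hs)).1.continuousAt.continuousWithinAt
            · intro s hs
              rw [interior_Icc] at hs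
              exact (hζdiff s (hIccsub (Ioo_subset_Icc_self hs))).1.differentiableWithinAt
            · intro s hs
              rw [interior_Icc] at hs
              exact hzder s (Ioo_subset_Icc_self hs)
          have hzge : ∀ s ∈ Icc r R, A ≤ ζ s := by
            intro s hs
            have := hzanti hs ⟨hr.2, le_refl R⟩ hs.2
            rwa [hbdry] at this
          have hsfA : ∀ s ∈ Icc r R, Real.sqrt (1 - 2 * m s / s) ≤ A := by
            intro s hs
            have hs' : s ∈ Ioc (0:ℝ) R := hIccsub hs
            have hs0 : (0:ℝ) < s := hs'.1
            have h1 := hfle s hs'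
            have h3 : s ^ 2 * R ≤ R ^ 3 := by
              nlinarith [mul_nonneg (sub_nonneg.2 hs.2) (by linarith : (0:ℝ) ≤ R + s), hR]
            have h2 : 1 - 2 * M * s ^ 2 / R ^ 3 ≤ 1 - 2 * M / R := by
              rw [sub_le_sub_iff_left, div_le_div_iff₀ hR hR3]
              nlinarith [mul_le_mul_of_nonpos_left h3 (by linarith : 2 * M ≤ 0)]
            exact Real.sqrt_le_sqrt (by linarith)
          -- the comparison function D = w - (g - M/R³) is antitone on [r, R]
          have hDanti : AntitoneOn (fun s => w s - (g s - M / R ^ 3)) (Icc r R) := by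
            apply antitoneOn_of_deriv_nonpos (convex_Icc r R)
            · exact fun s hs => ((hwdiff s (hIccsub hs)).sub
                ((hgdiff s (hIccsub hs)).sub_const _)).continuousAt.continuousWithinAt
            · intro s hs
              rw [interior_Icc] at hs
              have hs' := hIccsub (Ioo_subset_Icc_self hs)
              exact ((hwdiff s hs').sub ((hgdiff s hs').sub_const _)).differentiableWithinAt
            · intro s hs
              rw [interior_Icc] at hs
              have hs' : s ∈ Ioc (0:ℝ) R := hIccsub (Ioo_subset_Icc_self hs)
              have hderiv : deriv (fun s => w s - (g s - M / R ^ 3)) s =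
                  deriv w s - deriv g s := by
                rw [deriv_fun_sub (hwdiff s hs') ((hgdiff s hs').sub_const _),
                  deriv_sub_const]
              rw [hderiv, hode s hs']
              have hdg : deriv g s ≤ 0 := hgderiv s ⟨lt_trans hr0 hs.1, hs.2⟩
              have h1 : 1 ≤ ζ s / Real.sqrt (1 - 2 * m s / s) :=
                (one_le_div (hsfpos s hs')).2
                  ((hsfA s (Ioo_subset_Icc_self hs)).trans (hzge s (Ioo_subset_Icc_self hs)))
              nlinarith [mul_nonneg (sub_nonneg.2 h1) (neg_nonneg.2 hdg)]
          have hgR : g R = M / R ^ 3 := by simp only [hg]; rw [hmR]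
          have hwg : g r ≤ w r := by
            have hDval := hDanti (left_mem_Icc.2 hr.2) (right_mem_Icc.2 hr.2) hr.2
            simp only [] at hDval
            rw [hwR, hgR] at hDval
            linarith
          have hεnn : M / R ^ 3 ≤ g r := by
            simp only [hg]
            rw [div_le_div_iff₀ hR3 (pow_pos hr0 3)]
            nlinarith [hmlow' r hr]
          rcases le_or_gt 0 (g r) with hγ0 | hγ0
          · have h1 : M / R ^ 3 * Real.sqrt (1 - 2 * m r / r) ≤ 0 :=
              mul_nonpos_iff.2 (Or.inr ⟨hμneg.le, hsf.le⟩)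
            exact h1.trans (mul_nonneg hH.le (hγ0.trans hwg))
          · -- g r < 0 : squared comparison
            have hfr : 1 - 2 * m r / r = 1 - 2 * r ^ 2 * g r := by
              simp only [hg]
              field_simp
            have hsfsq : Real.sqrt (1 - 2 * m r / r) ^ 2 = 1 - 2 * r ^ 2 * g r := by
              rw [Real.sq_sqrt (hfpos r hr).le, hfr]
            have hHsq : Real.sqrt (1 - 2 * M * r ^ 2 / R ^ 3) ^ 2 =
                1 - 2 * (M / R ^ 3) * r ^ 2 := by
              rw [Real.sq_sqrt (hHpos r hr).le]
              ring
            set μ := M / R ^ 3 with hμ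
            set γ := g r with hγ
            set sf := Real.sqrt (1 - 2 * m r / r) with hsf'
            set H := Real.sqrt (1 - 2 * M * r ^ 2 / R ^ 3) with hH'
            have t1 : (0:ℝ) ≤ γ - μ := sub_nonneg.2 hεnn
            have hμγ : 0 < μ * γ := mul_pos_of_neg_of_neg hμneg hγ0
            have t2 : γ + μ - 2 * μ * r ^ 2 * γ < 0 := by
              nlinarith [mul_nonneg (sq_nonneg r) hμγ.le]
            have h1 : (H * γ) ^ 2 ≤ (μ * sf) ^ 2 := by
              have expand : (μ * sf) ^ 2 - (H * γ) ^ 2 =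
                  (γ - μ) * (-(γ + μ - 2 * μ * r ^ 2 * γ)) := by
                rw [mul_pow, mul_pow, hHsq, hsfsq]
                ring
              nlinarith [mul_nonneg t1 (by linarith : (0:ℝ) ≤ -(γ + μ - 2 * μ * r ^ 2 * γ))]
            have hXneg : H * γ < 0 := mul_neg_of_pos_of_neg hH hγ0
            have hYneg : μ * sf < 0 := mul_neg_of_neg_of_pos hμneg hsf
            have h2 : μ * sf ≤ H * γ := by
              by_contra hc
              push_neg at hc
              nlinarith [mul_pos (sub_pos.2 hc) (by linarith : (0:ℝ) < -(H * γ + μ * sf))]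
            exact h2.trans (mul_le_mul_of_nonneg_left hwg hH.le)
    -- conclude from main
    rw [hzer, mul_div_assoc', le_div_iff₀ hsf]
    calc M * r / R ^ 3 * Real.sqrt (1 - 2 * m r / r)
        = r * (M / R ^ 3 * Real.sqrt (1 - 2 * m r / r)) := by ring
      _ ≤ r * (Real.sqrt (1 - 2 * M * r ^ 2 / R ^ 3) * w r) :=
          mul_le_mul_of_nonneg_left main hr0.le
      _ = Real.sqrt (1 - 2 * M * r ^ 2 / R ^ 3) * (r * w r) := by ring
  -- final comparison via monotonicity of ζ - ζ*
  have hdiffsqrt : ∀ s ∈ Ioc (0:ℝ) R,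
      DifferentiableAt ℝ (fun s => Real.sqrt (1 - 2 * M * s ^ 2 / R ^ 3)) s := by
    intro s hs
    have d1 : DifferentiableAt ℝ (fun s : ℝ => 1 - 2 * M * s ^ 2 / R ^ 3) s :=
      (differentiableAt_const _).sub
        (((differentiableAt_const (2 * M)).mul (differentiableAt_id.pow 2)).div_const _)
    exact d1.sqrt (hHpos s hs).ne'
  have hmono : MonotoneOn
      (fun s => ζ s - 1 / 2 * (3 * A - Real.sqrt (1 - 2 * M * s ^ 2 / R ^ 3)))
      (Ioc (0:ℝ) R) := by
    apply monotoneOn_of_deriv_nonneg (convex_Ioc 0 R)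
    · apply ContinuousOn.sub
      · exact fun s hs => (hζdiff s hs).1.continuousAt.continuousWithinAt
      · apply Continuous.continuousOn
        have hc : Continuous fun s : ℝ => 1 - 2 * M * s ^ 2 / R ^ 3 := by continuity
        exact continuous_const.mul (continuous_const.sub (Real.continuous_sqrt.comp hc))
    · intro s hs
      rw [interior_Ioc] at hs
      have hs' : s ∈ Ioc (0:ℝ) R := Ioo_subset_Ioc_self hs
      exact ((hζdiff s hs').1.sub (((differentiableAt_const (3 * A)).sub
        (hdiffsqrt s hs')).const_mul (1 / 2))).differentiableWithinAt
    · intro s hs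
      rw [interior_Ioc] at hs
      have hs' : s ∈ Ioc (0:ℝ) R := Ioo_subset_Ioc_self hs
      have hHp : 0 < Real.sqrt (1 - 2 * M * s ^ 2 / R ^ 3) := Real.sqrt_pos.2 (hHpos s hs')
      have hu : HasDerivAt (fun s : ℝ => 1 - 2 * M * s ^ 2 / R ^ 3)
          (-(2 * M * (2 * s) / R ^ 3)) s := by
        have h2 : HasDerivAt (fun s : ℝ => s ^ 2) (2 * s) s := by
          simpa using hasDerivAt_pow 2 s
        have h3 := ((h2.const_mul (2 * M)).div_const (R ^ 3)).const_sub 1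
        convert h3 using 1
      have hψ : HasDerivAt (fun s : ℝ => Real.sqrt (1 - 2 * M * s ^ 2 / R ^ 3))
          (-(2 * M * (2 * s) / R ^ 3) / (2 * Real.sqrt (1 - 2 * M * s ^ 2 / R ^ 3))) s :=
        hu.sqrt (hHpos s hs').ne'
      have hφ : HasDerivAt
          (fun s => ζ s - 1 / 2 * (3 * A - Real.sqrt (1 - 2 * M * s ^ 2 / R ^ 3)))
          (deriv ζ s - 1 / 2 * (0 - -(2 * M * (2 * s) / R ^ 3) /
            (2 * Real.sqrt (1 - 2 * M * s ^ 2 / R ^ 3)))) s :=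
        (hζdiff s hs').1.hasDerivAt.sub (((hasDerivAt_const s (3 * A)).sub hψ).const_mul (1 / 2))
      rw [hφ.deriv, sub_nonneg]
      have hk := hkey s hs'
      obtain ⟨H, hHdef⟩ : ∃ H, Real.sqrt (1 - 2 * M * s ^ 2 / R ^ 3) = H := ⟨_, rfl⟩
      rw [hHdef] at hk hHp ⊢
      have e : 1 / 2 * (0 - -(2 * M * (2 * s) / R ^ 3) / (2 * H)) = M * s / R ^ 3 / H := by
        field_simp
        ring
      rw [e, div_le_iff₀ hHp]
      nlinarith [hk]
  intro r hr
  have hle := hmono hr hRIoc hr.2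
  simp only [] at hle
  have hRR : 1 - 2 * M * R ^ 2 / R ^ 3 = 1 - 2 * M / R := by
    rw [sub_right_inj]
    field_simp
  rw [hRR, ← hA, hbdry] at hle
  linarith [hle]
end

section
/- Under the hypotheses guaranteeing ζ(r) ≤ ζ*(r) = (1/2)[3√(1-2M/R) - √(1-2Mr²/R³)], if additionally ζ(r) > 0 for all r ∈ (0,R] (regular center with ζ continuous and positive at 0), then 2M/R ≤ 8/9. -/
open Real Set Topology Filter

/-- Buchdahl–Bondi bound: if a positive lapse with regular center is bounded
above by the interior-Schwarzschild lapse `ζ*`, then `2M/R ≤ 8/9`. -/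
theorem buchdahl_bondi_bound
    (R M : ℝ) (hR : 0 < R) (ζ : ℝ → ℝ)
    (hζcont : ContinuousWithinAt ζ (Icc 0 R) 0)
    (hζc : 0 < ζ 0)
    (hζpos : ∀ r ∈ Ioc (0:ℝ) R, 0 < ζ r)
    (hζle : ∀ r ∈ Ioc (0:ℝ) R,
      ζ r ≤ (1 / 2) *
        (3 * Real.sqrt (1 - 2 * M / R) - Real.sqrt (1 - 2 * M * r ^ 2 / R ^ 3))) :
    2 * M / R ≤ 8 / 9 := by
  set g : ℝ → ℝ := fun r => (1 / 2) *
      (3 * Real.sqrt (1 - 2 * M / R) - Real.sqrt (1 - 2 * M * r ^ 2 / R ^ 3)) with hg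
  have hne : (𝓝[Ioc (0:ℝ) R] 0).NeBot := by
    rw [← mem_closure_iff_nhdsWithin_neBot, closure_Ioc hR.ne]
    exact ⟨le_rfl, hR.le⟩
  have hf : Filter.Tendsto ζ (𝓝[Ioc (0:ℝ) R] 0) (𝓝 (ζ 0)) :=
    hζcont.mono_left (nhdsWithin_mono _ Ioc_subset_Icc_self)
  have hgcont : Filter.Tendsto g (𝓝[Ioc (0:ℝ) R] 0) (𝓝 (g 0)) := by
    apply ContinuousAt.continuousWithinAt
    apply ContinuousAt.mul continuousAt_const
    apply ContinuousAt.sub continuousAt_const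
    exact (Real.continuous_sqrt.comp (by continuity)).continuousAt
  have hle0 : ζ 0 ≤ g 0 := le_of_tendsto_of_tendsto hf hgcont (eventually_nhdsWithin_of_forall hζle)
  have hg0 : g 0 = (1 / 2) * (3 * Real.sqrt (1 - 2 * M / R) - 1) := by
    simp [hg]
  have hs : 1 / 3 < Real.sqrt (1 - 2 * M / R) := by
    rw [hg0] at hle0
    nlinarith [hζc]
  have hnn : (0:ℝ) ≤ 1 - 2 * M / R := by
    by_contra h
    push_neg at h
    rw [Real.sqrt_eq_zero_of_nonpos h.le] at hs
    linarith
  have hsq : Real.sqrt (1 - 2 * M / R) ^ 2 = 1 - 2 * M / R := Real.sq_sqrt hnn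
  nlinarith [hs, hsq]
end

section
/- For a static fluid sphere with nonincreasing average density, positive pressure, regular center (ζ(0) > 0), and satisfying the Einstein equation g(r) = (m(r)+4πp(r)r³)/(r²(1-2m(r)/r)) together with (1/r)√(1-2m/r)·ζ' nonincreasing, the internal compactness obeys 2m(r)/r ≤ (8/9)[1 + √(1+6πp(r)r²)/2 - (1+6πp(r)r²)/2] for all r ∈ (0,R]. -/
/-!
Buchdahl's argument. Fix `r` and put `x = 2m(r)/r`. Since the average density does not increase,
`2m(s)/s ≥ x s²/r²` for `s ≤ r`, and since `(1/s) √(1 - 2m(s)/s) ζ'(s)` does not increase, this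
gives `ζ'(s) ≥ F s / √(1 - x s²/r²)` with `F = (1/r) √(1 - x) ζ'(r)`: the metric is compared with
the one of a uniform-density star. Integrating over `[0, r]` and using `ζ(0) > 0` yields
`F r² / (1 + √(1 - x)) < ζ(r)`, and the Einstein equation turns this into
`x/2 + 4πp(r)r² < √(1 - x) (1 + √(1 - x))` (trivially true when `m(r) + 4πp(r)r³ ≤ 0`),
which solves to the stated bound.
-/

open Real Set

lemma sub_le_sub_of_hasDerivAt_le {f g f' g' : ℝ → ℝ} {a b : ℝ} (hab : a ≤ b)
    (hf : ContinuousOn f (Icc a b)) (hg : ContinuousOn g (Icc a b))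
    (hf' : ∀ x ∈ Ioo a b, HasDerivAt f (f' x) x) (hg' : ∀ x ∈ Ioo a b, HasDerivAt g (g' x) x)
    (hle : ∀ x ∈ Ioo a b, g' x ≤ f' x) : g b - g a ≤ f b - f a := by
  have hmono : MonotoneOn (fun x => f x - g x) (Icc a b) := by
    refine monotoneOn_of_hasDerivWithinAt_nonneg (f' := fun x => f' x - g' x) (convex_Icc a b)
      (hf.sub hg) ?_ ?_
    · rw [interior_Icc]
      exact fun x hx => ((hf' x hx).sub (hg' x hx)).hasDerivWithinAt
    · rw [interior_Icc]
      exact fun x hx => sub_nonneg.mpr (hle x hx)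
  have := hmono (left_mem_Icc.mpr hab) (right_mem_Icc.mpr hab) hab
  simp only at this
  linarith

/-- `(1 - √(1 - k s²)) / k`, written so as to stay regular at `k = 0`. -/
noncomputable def sqrtPotential (k s : ℝ) : ℝ := s ^ 2 / (1 + √(1 - k * s ^ 2))

@[simp]
lemma sqrtPotential_zero_right (k : ℝ) : sqrtPotential k 0 = 0 := by
  simp [sqrtPotential]

lemma continuous_sqrtPotential (k : ℝ) : Continuous (sqrtPotential k) := by
  refine (continuous_pow 2).div (by fun_prop) fun s => ?_
  positivity

lemma hasDerivAt_sqrtPotential {k s : ℝ} (hs : 0 < 1 - k * s ^ 2) :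
    HasDerivAt (sqrtPotential k) (s / √(1 - k * s ^ 2)) s := by
  have hinner : HasDerivAt (fun t => 1 - k * t ^ 2) (-(k * (2 * s))) s := by
    simpa using ((hasDerivAt_pow 2 s).const_mul k).const_sub 1
  have hden : HasDerivAt (fun t => 1 + √(1 - k * t ^ 2))
      (-(k * (2 * s)) / (2 * √(1 - k * s ^ 2))) s :=
    (hinner.sqrt hs.ne').const_add 1
  refine ((hasDerivAt_pow 2 s).div hden (by positivity)).congr_deriv ?_
  have hroot : 0 < √(1 - k * s ^ 2) := sqrt_pos.mpr hs
  have hsq : √(1 - k * s ^ 2) ^ 2 = 1 - k * s ^ 2 := sq_sqrt hs.le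
  field_simp
  linear_combination s * hsq

lemma le_buchdahl_bound {x z : ℝ} (hx : x < 1) (hz : 0 ≤ z)
    (h : x / 2 + 2 * z / 3 < √(1 - x) * (1 + √(1 - x))) :
    x ≤ 8 / 9 * (1 + √(1 + z) / 2 - (1 + z) / 2) := by
  set u := √(1 - x)
  set v := √(1 + z)
  have hu : 0 ≤ u := sqrt_nonneg _
  have hu2 : u ^ 2 = 1 - x := sq_sqrt (by linarith)
  have hv1 : 1 ≤ v := one_le_sqrt.mpr (by linarith)
  have hv2 : v ^ 2 = 1 + z := sq_sqrt (by linarith)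
  -- with `x = 1 - u²` and `z = v² - 1` the hypothesis reads `(2v)² < (3u + 1)²`
  have h2v : 2 * v < 3 * u + 1 :=
    lt_of_pow_lt_pow_left₀ 2 (by positivity) (by nlinarith)
  nlinarith [mul_self_le_mul_self (by linarith : (0 : ℝ) ≤ 2 * v - 1)
    (by linarith : 2 * v - 1 ≤ 3 * u)]

section StaticFluidSphere

variable {R : ℝ} {m ζ p : ℝ → ℝ}

lemma mass_div_cube_mul_sq_le (havg : AntitoneOn (fun r => 3 * m r / (4 * π * r ^ 3)) (Ioc 0 R))
    {r s : ℝ} (hs : 0 < s) (hsr : s ≤ r) (hrR : r ≤ R) :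
    2 * m r / r ^ 3 * s ^ 2 ≤ 2 * m s / s := by
  have hr : 0 < r := hs.trans_le hsr
  have h := havg ⟨hs, hsr.trans hrR⟩ ⟨hr, hrR⟩ hsr
  simp only at h
  rw [div_le_div_iff₀ (by positivity) (by positivity)] at h
  have h' : m r * s ^ 3 ≤ m s * r ^ 3 :=
    le_of_mul_le_mul_left (a := 12 * π) (by linarith) (by positivity)
  rw [div_mul_eq_mul_div, div_le_div_iff₀ (by positivity) hs]
  linarith

lemma one_sub_mass_div_cube_mul_sq_pos (hcompact : ∀ r ∈ Ioc (0:ℝ) R, 2 * m r / r < 1)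
    (havg : AntitoneOn (fun r => 3 * m r / (4 * π * r ^ 3)) (Ioc 0 R))
    {r s : ℝ} (hs : 0 < s) (hsr : s ≤ r) (hrR : r ≤ R) :
    0 < 1 - 2 * m r / r ^ 3 * s ^ 2 := by
  linarith [mass_div_cube_mul_sq_le havg hs hsr hrR, hcompact s ⟨hs, hsr.trans hrR⟩]

lemma mul_div_sqrt_le_deriv (hcompact : ∀ r ∈ Ioc (0:ℝ) R, 2 * m r / r < 1)
    (havg : AntitoneOn (fun r => 3 * m r / (4 * π * r ^ 3)) (Ioc 0 R))
    (hmono : AntitoneOn (fun r => (1 / r) * √(1 - 2 * m r / r) * deriv ζ r) (Ioc 0 R))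
    {r s : ℝ} (hs : 0 < s) (hsr : s ≤ r) (hrR : r ≤ R)
    (hF : 0 ≤ 1 / r * √(1 - 2 * m r / r) * deriv ζ r) :
    1 / r * √(1 - 2 * m r / r) * deriv ζ r * (s / √(1 - 2 * m r / r ^ 3 * s ^ 2))
      ≤ deriv ζ s := by
  have ha : 0 < 1 - 2 * m s / s := by linarith [hcompact s ⟨hs, hsr.trans hrR⟩]
  have hab := mass_div_cube_mul_sq_le havg hs hsr hrR
  have hFs := hmono ⟨hs, hsr.trans hrR⟩ ⟨hs.trans_le hsr, hrR⟩ hsr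
  simp only at hFs
  set a := √(1 - 2 * m s / s)
  have hroot : 0 < a := sqrt_pos.mpr ha
  calc 1 / r * √(1 - 2 * m r / r) * deriv ζ r * (s / √(1 - 2 * m r / r ^ 3 * s ^ 2))
      ≤ 1 / r * √(1 - 2 * m r / r) * deriv ζ r * (s / a) := by
        gcongr
        exact sqrt_le_sqrt (by linarith)
    _ ≤ 1 / s * a * deriv ζ s * (s / a) := by gcongr
    _ = deriv ζ s := by clear_value a; field_simp

lemma mul_sqrtPotential_le_sub (hζcont : ContinuousOn ζ (Icc 0 R))
    (hζdiff : ∀ r ∈ Ioc (0:ℝ) R, DifferentiableAt ℝ ζ r)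
    (hcompact : ∀ r ∈ Ioc (0:ℝ) R, 2 * m r / r < 1)
    (havg : AntitoneOn (fun r => 3 * m r / (4 * π * r ^ 3)) (Ioc 0 R))
    (hmono : AntitoneOn (fun r => (1 / r) * √(1 - 2 * m r / r) * deriv ζ r) (Ioc 0 R))
    {r : ℝ} (hr : 0 < r) (hrR : r ≤ R) (hF : 0 ≤ 1 / r * √(1 - 2 * m r / r) * deriv ζ r) :
    1 / r * √(1 - 2 * m r / r) * deriv ζ r * sqrtPotential (2 * m r / r ^ 3) r ≤ ζ r - ζ 0 := by
  simpa using sub_le_sub_of_hasDerivAt_le hr.le (hζcont.mono (Icc_subset_Icc_right hrR))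
    (continuous_const.mul (continuous_sqrtPotential _)).continuousOn
    (fun s hs => (hζdiff s ⟨hs.1, hs.2.le.trans hrR⟩).hasDerivAt)
    (fun s hs => (hasDerivAt_sqrtPotential
      (one_sub_mass_div_cube_mul_sq_pos hcompact havg hs.1 hs.2.le hrR)).const_mul _)
    (fun s hs => mul_div_sqrt_le_deriv hcompact havg hmono hs.1 hs.2.le hrR hF)

lemma mass_add_pressure_lt (hζcont : ContinuousOn ζ (Icc 0 R)) (hζc : 0 < ζ 0)
    (hζpos : ∀ r ∈ Ioc (0:ℝ) R, 0 < ζ r)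
    (hζdiff : ∀ r ∈ Ioc (0:ℝ) R, DifferentiableAt ℝ ζ r)
    (hcompact : ∀ r ∈ Ioc (0:ℝ) R, 2 * m r / r < 1)
    (havg : AntitoneOn (fun r => 3 * m r / (4 * π * r ^ 3)) (Ioc 0 R))
    (heinstein : ∀ r ∈ Ioc (0:ℝ) R,
      deriv ζ r / ζ r = (m r + 4 * π * p r * r ^ 3) / (r ^ 2 * (1 - 2 * m r / r)))
    (hmono : AntitoneOn (fun r => (1 / r) * √(1 - 2 * m r / r) * deriv ζ r) (Ioc 0 R))
    {r : ℝ} (hr : r ∈ Ioc 0 R) :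
    m r + 4 * π * p r * r ^ 3 < r * (√(1 - 2 * m r / r) * (1 + √(1 - 2 * m r / r))) := by
  have hr0 := hr.1
  have hζr := hζpos r hr
  have hx : 0 < 1 - 2 * m r / r := by linarith [hcompact r hr]
  set u := √(1 - 2 * m r / r)
  have hu : 0 < u := sqrt_pos.mpr hx
  have hu2 : u ^ 2 = 1 - 2 * m r / r := sq_sqrt hx.le
  set A := m r + 4 * π * p r * r ^ 3
  rcases le_or_gt A 0 with hA | hA
  · have : 0 < r * (u * (1 + u)) := by positivity
    linarith
  have hF : 1 / r * u * deriv ζ r = ζ r * A / (r ^ 3 * u) := by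
    have hdζ : deriv ζ r / ζ r = A / (r ^ 2 * (1 - 2 * m r / r)) := heinstein r hr
    rw [← hu2, div_eq_iff hζr.ne'] at hdζ
    rw [hdζ]
    field_simp
  have hΦ : sqrtPotential (2 * m r / r ^ 3) r = r ^ 2 / (1 + u) := by
    rw [sqrtPotential, show 2 * m r / r ^ 3 * r ^ 2 = 2 * m r / r by field_simp]
  have hcmp := mul_sqrtPotential_le_sub hζcont hζdiff hcompact havg hmono hr0 hr.2
    (by rw [hF]; positivity)
  rw [hF, hΦ] at hcmp
  have hlt : ζ r * (A / (r * (u * (1 + u)))) < ζ r * 1 := by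
    calc ζ r * (A / (r * (u * (1 + u)))) = ζ r * A / (r ^ 3 * u) * (r ^ 2 / (1 + u)) := by
          field_simp
      _ ≤ ζ r - ζ 0 := hcmp
      _ < ζ r * 1 := by linarith
  rwa [mul_lt_mul_iff_right₀ hζr, div_lt_one (by positivity)] at hlt

end StaticFluidSphere

theorem internal_compactness_bound_general
    (R : ℝ) (m ζ p : ℝ → ℝ)
    (hζcont : ContinuousOn ζ (Icc 0 R))
    (hζc : 0 < ζ 0)
    (hζpos : ∀ r ∈ Ioc (0:ℝ) R, 0 < ζ r)
    (hζdiff : ∀ r ∈ Ioc (0:ℝ) R, DifferentiableAt ℝ ζ r)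
    (hppos : ∀ r ∈ Ioc (0:ℝ) R, 0 ≤ p r)
    (hcompact : ∀ r ∈ Ioc (0:ℝ) R, 2 * m r / r < 1)
    (havg : AntitoneOn (fun r => 3 * m r / (4 * π * r ^ 3)) (Ioc 0 R))
    (heinstein : ∀ r ∈ Ioc (0:ℝ) R,
      deriv ζ r / ζ r = (m r + 4 * π * p r * r ^ 3) / (r ^ 2 * (1 - 2 * m r / r)))
    (hmono : AntitoneOn
      (fun r => (1 / r) * Real.sqrt (1 - 2 * m r / r) * deriv ζ r) (Ioc 0 R)) :
    ∀ r ∈ Ioc (0:ℝ) R,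
      2 * m r / r ≤ (8 / 9) *
        (1 + Real.sqrt (1 + 6 * π * p r * r ^ 2) / 2
          - (1 + 6 * π * p r * r ^ 2) / 2) := by
  intro r hr
  have hp := hppos r hr
  refine le_buchdahl_bound (hcompact r hr) (by positivity) ?_
  have hr0 := hr.1
  have hdimensionless : 2 * m r / r / 2 + 2 * (6 * π * p r * r ^ 2) / 3
      = (m r + 4 * π * p r * r ^ 3) / r := by
    field_simp
    ring
  rw [hdimensionless, div_lt_iff₀' hr0]
  exact mass_add_pressure_lt hζcont hζc hζpos hζdiff hcompact havg heinstein hmono hr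

/-- Bound on the internal compactness:
`2m(r)/r ≤ (8/9)[1 + √(1+6πp(r)r²)/2 - (1+6πp(r)r²)/2]`. -/
theorem internal_compactness_bound
    (R : ℝ) (hR : 0 < R) (m ζ p : ℝ → ℝ)
    (hζcont : ContinuousOn ζ (Icc 0 R))
    (hζc : 0 < ζ 0)
    (hζpos : ∀ r ∈ Ioc (0:ℝ) R, 0 < ζ r)
    (hζdiff : ∀ r ∈ Ioc (0:ℝ) R, DifferentiableAt ℝ ζ r)
    (hppos : ∀ r ∈ Ioc (0:ℝ) R, 0 ≤ p r)
    (hcompact : ∀ r ∈ Ioc (0:ℝ) R, 2 * m r / r < 1)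
    (havg : AntitoneOn (fun r => 3 * m r / (4 * π * r ^ 3)) (Ioc 0 R))
    (heinstein : ∀ r ∈ Ioc (0:ℝ) R,
      deriv ζ r / ζ r = (m r + 4 * π * p r * r ^ 3) / (r ^ 2 * (1 - 2 * m r / r)))
    (hmono : AntitoneOn
      (fun r => (1 / r) * Real.sqrt (1 - 2 * m r / r) * deriv ζ r) (Ioc 0 R)) :
    ∀ r ∈ Ioc (0:ℝ) R,
      2 * m r / r ≤ (8 / 9) *
        (1 + Real.sqrt (1 + 6 * π * p r * r ^ 2) / 2
          - (1 + 6 * π * p r * r ^ 2) / 2) :=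
  internal_compactness_bound_general R m ζ p hζcont hζc hζpos hζdiff hppos hcompact havg heinstein
    hmono
end

section
/- Given the inequality 1 - 2m(r)/r + √(1-2m(r)/r) ≥ 4πp(r)r² + m(r)/r with p(r) ≥ 0 and 0 ≤ 2m(r)/r < 1, it follows that 2m(r)/r ≤ 8/9. -/
open Real

/-- Algebraic core of the compactness bound: from
`1 - 2m/r + √(1-2m/r) ≥ 4πpr² + m/r` with `p ≥ 0` and `0 ≤ 2m/r < 1`,
conclude `2m/r ≤ 8/9`. -/
theorem compactness_algebraic_bound
    (m p r : ℝ) (hr : 0 < r) (hp : 0 ≤ p)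
    (hx0 : 0 ≤ 2 * m / r) (hx1 : 2 * m / r < 1)
    (h : 1 - 2 * m / r + Real.sqrt (1 - 2 * m / r) ≥ 4 * π * p * r ^ 2 + m / r) :
    2 * m / r ≤ 8 / 9 := by
  set x := 2 * m / r with hx
  have hmr : m / r = x / 2 := by rw [hx]; ring
  have hq : 0 ≤ 4 * π * p * r ^ 2 := by positivity
  have hs := Real.sq_sqrt (by linarith : (0:ℝ) ≤ 1 - x)
  have hsn := Real.sqrt_nonneg (1 - x)
  rw [hmr] at h
  nlinarith [sq_nonneg (Real.sqrt (1 - x) - (3 * x / 2 - 1))]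
end

section
/- Suppose p·ζ satisfies (pζ)' = -ρζ' on (0,R), p(R) = 0, ζ'(r) ≥ (Mr/R³)/√(1-2m(r)/r), m(r) ≥ Mr³/R³, 2m(r)/r < 1, and ρ(r) = m'(r)/(4πr²) ≥ 0. Then p(r)ζ(r) ≥ (ρ*/6)·[2√(1-2m(r)/r) + √(1-2Mr²/R³) - 3√(1-2M/R)] for all r ∈ (0,R], where ρ* = 3M/(4πR³). -/
open Real Set

/-- Pressure-profile lower bound: `p(r)ζ(r) ≥ (ρ*/6)[2√(1-2m(r)/r)
+ √(1-2Mr²/R³) - 3√(1-2M/R)]` with `M = m(R)`, `ρ* = 3M/(4πR³)`. -/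
theorem pressure_profile_lower_bound
    (R M : ℝ) (hR : 0 < R) (m ρ p ζ : ℝ → ℝ) (hM : M = m R)
    (hpζ : ∀ r ∈ Ioo (0:ℝ) R,
      HasDerivAt (fun s => p s * ζ s) (-(ρ r * deriv ζ r)) r)
    (hcont : ContinuousOn (fun s => p s * ζ s) (Icc 0 R))
    (hpR : p R = 0)
    (hζ' : ∀ r ∈ Ioc (0:ℝ) R,
      deriv ζ r ≥ (M * r / R ^ 3) / Real.sqrt (1 - 2 * m r / r))
    (hmlow : ∀ r ∈ Ioc (0:ℝ) R, m r ≥ M * r ^ 3 / R ^ 3)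
    (hcompact : ∀ r ∈ Ioc (0:ℝ) R, 2 * m r / r < 1)
    (hmdiff : ∀ r ∈ Ioc (0:ℝ) R, HasDerivAt m (4 * π * ρ r * r ^ 2) r)
    (hρpos : ∀ r ∈ Ioc (0:ℝ) R, 0 ≤ ρ r) :
    ∀ r ∈ Ioc (0:ℝ) R,
      p r * ζ r ≥ (3 * M / (4 * π * R ^ 3) / 6) *
        (2 * Real.sqrt (1 - 2 * m r / r) + Real.sqrt (1 - 2 * M * r ^ 2 / R ^ 3)
          - 3 * Real.sqrt (1 - 2 * M / R)) := by
  have hπ : (0:ℝ) < π := Real.pi_pos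
  have hR3 : (0:ℝ) < R ^ 3 := by positivity
  -- M is nonnegative
  have hMnn : 0 ≤ M := by
    have hsub : Icc (R/2) R ⊆ Ioc (0:ℝ) R := fun s hs => ⟨by linarith [hs.1], hs.2⟩
    have hmono : MonotoneOn m (Icc (R/2) R) := by
      apply monotoneOn_of_deriv_nonneg (convex_Icc _ _)
      · exact fun s hs => ((hmdiff s (hsub hs)).continuousAt).continuousWithinAt
      · intro s hs
        rw [interior_Icc] at hs
        exact ((hmdiff s (hsub ⟨hs.1.le, hs.2.le⟩)).differentiableAt).differentiableWithinAt
      · intro s hs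
        rw [interior_Icc] at hs
        rw [(hmdiff s (hsub ⟨hs.1.le, hs.2.le⟩)).deriv]
        have h1 : 0 ≤ ρ s := hρpos s (hsub ⟨hs.1.le, hs.2.le⟩)
        have h2 : (0:ℝ) ≤ s ^ 2 := sq_nonneg s
        exact mul_nonneg (mul_nonneg (by positivity) h1) h2
    have h1 : m (R/2) ≤ m R :=
      hmono ⟨le_rfl, by linarith⟩ ⟨by linarith, le_rfl⟩ (by linarith)
    have h2 : m (R/2) ≥ M * (R/2) ^ 3 / R ^ 3 :=
      hmlow (R/2) ⟨by linarith, by linarith⟩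
    have h3 : M * (R/2) ^ 3 / R ^ 3 = M / 8 := by field_simp; ring
    rw [h3] at h2
    rw [← hM] at h1
    linarith
  set c : ℝ := M / (4 * π * R ^ 3) with hc
  have hcnn : 0 ≤ c := by
    apply div_nonneg hMnn; positivity
  -- pointwise positivity facts
  have hupos : ∀ s ∈ Ioc (0:ℝ) R, 0 < 1 - 2 * m s / s := fun s hs => by
    linarith [hcompact s hs]
  have huv : ∀ s ∈ Ioc (0:ℝ) R, 1 - 2 * m s / s ≤ 1 - 2 * M * s ^ 2 / R ^ 3 := by
    intro s hs
    have h1 := hmlow s hs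
    have hs0 := hs.1
    have key : 2 * M * s ^ 2 / R ^ 3 ≤ 2 * m s / s := by
      rw [div_le_div_iff₀ hR3 hs0]
      have h2 : M * s ^ 3 / R ^ 3 ≤ m s := h1
      rw [div_le_iff₀ hR3] at h2
      nlinarith
    linarith
  have hvpos : ∀ s ∈ Ioc (0:ℝ) R, 0 < 1 - 2 * M * s ^ 2 / R ^ 3 := fun s hs =>
    lt_of_lt_of_le (hupos s hs) (huv s hs)
  intro r hr
  obtain ⟨hr0, hrR⟩ := hr
  -- the auxiliary function
  set g : ℝ → ℝ := fun s => p s * ζ s - c * Real.sqrt (1 - 2 * m s / s)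
      - c / 2 * Real.sqrt (1 - 2 * M * s ^ 2 / R ^ 3) with hg
  -- derivative of g on the interior
  have hgderiv : ∀ s ∈ Ioo r R, HasDerivAt g
      (-(ρ s * deriv ζ s)
        - c * (((2 * m s - 2 * (4 * π * ρ s * s ^ 2) * s) / s ^ 2)
            / (2 * Real.sqrt (1 - 2 * m s / s)))
        - c / 2 * ((-(2 * M * (2 * s)) / R ^ 3)
            / (2 * Real.sqrt (1 - 2 * M * s ^ 2 / R ^ 3)))) s := by
    intro s hs
    have hsIoc : s ∈ Ioc (0:ℝ) R := ⟨lt_trans hr0 hs.1, hs.2.le⟩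
    have hs0 : s ≠ 0 := ne_of_gt hsIoc.1
    have hA : HasDerivAt (fun t => p t * ζ t) (-(ρ s * deriv ζ s)) s :=
      hpζ s ⟨hsIoc.1, hs.2⟩
    have hB : HasDerivAt (fun t => Real.sqrt (1 - 2 * m t / t))
        (((2 * m s - 2 * (4 * π * ρ s * s ^ 2) * s) / s ^ 2)
          / (2 * Real.sqrt (1 - 2 * m s / s))) s := by
      have h0 : HasDerivAt (fun t => 1 - 2 * m t / t)
          ((2 * m s - 2 * (4 * π * ρ s * s ^ 2) * s) / s ^ 2) s := by
        have h1 : HasDerivAt (fun t => 2 * m t / t)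
            ((2 * (4 * π * ρ s * s ^ 2) * s - 2 * m s * 1) / s ^ 2) s :=
          ((hmdiff s hsIoc).const_mul 2).div (hasDerivAt_id s) hs0
        have h2 := h1.const_sub 1
        refine h2.congr_deriv ?_
        ring
      exact h0.sqrt (ne_of_gt (hupos s hsIoc))
    have hC : HasDerivAt (fun t => Real.sqrt (1 - 2 * M * t ^ 2 / R ^ 3))
        ((-(2 * M * (2 * s)) / R ^ 3)
          / (2 * Real.sqrt (1 - 2 * M * s ^ 2 / R ^ 3))) s := by
      have h0 : HasDerivAt (fun t => 1 - 2 * M * t ^ 2 / R ^ 3)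
          (-(2 * M * (2 * s)) / R ^ 3) s := by
        have h1 : HasDerivAt (fun t : ℝ => t ^ 2) (2 * s) s := by
          simpa using hasDerivAt_pow 2 s
        have h2 := ((h1.const_mul (2 * M)).div_const (R ^ 3)).const_sub 1
        refine h2.congr_deriv ?_
        ring
      exact h0.sqrt (ne_of_gt (hvpos s hsIoc))
    exact (hA.sub (hB.const_mul c)).sub (hC.const_mul (c / 2))
  -- the derivative is nonpositive
  have hgderiv_nonpos : ∀ s ∈ Ioo r R, deriv g s ≤ 0 := by
    intro s hs
    rw [(hgderiv s hs).deriv]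
    have hsIoc : s ∈ Ioc (0:ℝ) R := ⟨lt_trans hr0 hs.1, hs.2.le⟩
    have hs0 : (0:ℝ) < s := hsIoc.1
    set q : ℝ := Real.sqrt (1 - 2 * m s / s) with hq
    set w : ℝ := Real.sqrt (1 - 2 * M * s ^ 2 / R ^ 3) with hw
    have hqpos : 0 < q := Real.sqrt_pos.mpr (hupos s hsIoc)
    have hwpos : 0 < w := Real.sqrt_pos.mpr (hvpos s hsIoc)
    have hqw : q ≤ w := Real.sqrt_le_sqrt (huv s hsIoc)
    have hρ : 0 ≤ ρ s := hρpos s hsIoc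
    have h1 : ρ s * ((M * s / R ^ 3) / q) ≤ ρ s * deriv ζ s :=
      mul_le_mul_of_nonneg_left (hζ' s hsIoc) hρ
    have hmb : M * s / R ^ 3 ≤ m s / s ^ 2 := by
      have h2 : M * s ^ 3 / R ^ 3 ≤ m s := hmlow s hsIoc
      rw [div_le_iff₀ hR3] at h2
      rw [div_le_div_iff₀ hR3 (by positivity)]
      nlinarith
    have hMs : 0 ≤ M * s / R ^ 3 := by positivity
    have key : (M * s / R ^ 3) / w ≤ (m s / s ^ 2) / q :=
      div_le_div₀ (le_trans hMs hmb) hmb hqpos hqw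
    have key' : c * ((M * s / R ^ 3) / w) ≤ c * ((m s / s ^ 2) / q) :=
      mul_le_mul_of_nonneg_left key hcnn
    have e1 : c * (((2 * m s - 2 * (4 * π * ρ s * s ^ 2) * s) / s ^ 2) / (2 * q))
        = c * ((m s / s ^ 2) / q) - ρ s * ((M * s / R ^ 3) / q) := by
      rw [hc]
      field_simp
    have e2 : c / 2 * ((-(2 * M * (2 * s)) / R ^ 3) / (2 * w))
        = -(c * ((M * s / R ^ 3) / w)) := by
      field_simp
    rw [e1, e2]
    linarith
  -- g is antitone on [r, R]
  have hIccsub : Icc r R ⊆ Ioc (0:ℝ) R := fun s hs => ⟨lt_of_lt_of_le hr0 hs.1, hs.2⟩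
  have hgcont : ContinuousOn g (Icc r R) := by
    have hcsq1 : ContinuousOn (fun s => Real.sqrt (1 - 2 * m s / s)) (Icc r R) := by
      apply Real.continuous_sqrt.comp_continuousOn
      apply ContinuousOn.sub continuousOn_const
      apply ContinuousOn.div
      · exact continuousOn_const.mul (fun x hx =>
          ((hmdiff x (hIccsub hx)).continuousAt).continuousWithinAt)
      · exact continuousOn_id
      · exact fun x hx => ne_of_gt (lt_of_lt_of_le hr0 hx.1)
    have hcsq2 : Continuous (fun s : ℝ => Real.sqrt (1 - 2 * M * s ^ 2 / R ^ 3)) :=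
      (continuous_const.sub ((continuous_const.mul (continuous_pow 2)).div_const _)).sqrt
    exact ((hcont.mono (Icc_subset_Icc hr0.le le_rfl)).sub
      (continuousOn_const.mul hcsq1)).sub (continuousOn_const.mul hcsq2.continuousOn)
  have hAnti : AntitoneOn g (Icc r R) := by
    apply antitoneOn_of_deriv_nonpos (convex_Icc _ _) hgcont
    · intro s hs
      rw [interior_Icc] at hs
      exact ((hgderiv s hs).differentiableAt).differentiableWithinAt
    · intro s hs
      rw [interior_Icc] at hs
      exact hgderiv_nonpos s hs
  have hgRr : g R ≤ g r := hAnti ⟨le_rfl, hrR⟩ ⟨hrR, le_rfl⟩ hrR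
  rw [hg] at hgRr
  simp only at hgRr
  have hsqR : Real.sqrt (1 - 2 * M * R ^ 2 / R ^ 3) = Real.sqrt (1 - 2 * M / R) := by
    rw [show 2 * M * R ^ 2 / R ^ 3 = 2 * M / R by
      field_simp]
  have hmR : Real.sqrt (1 - 2 * m R / R) = Real.sqrt (1 - 2 * M / R) := by rw [hM]
  rw [hpR, hsqR, hmR, zero_mul] at hgRr
  have hcoef : 3 * M / (4 * π * R ^ 3) / 6 = c / 2 := by
    rw [hc]; ring
  rw [hcoef]
  linarith
end

section
/- Under the hypotheses giving p(r)ζ(r) ≥ (ρ*/6)[2√(1-2m(r)/r) + √(1-2Mr²/R³) - 3√(1-2M/R)] and ζ(r) ≤ ζ*(r), the central pressure satisfies p_c ≥ p_c* = ρ*·(1-√(1-2M/R))/(3√(1-2M/R) - 1), provided 2M/R < 8/9. -/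
open Real Set

/-- Central pressure bound: `p_c ≥ p_c* = ρ*(1-√(1-2M/R))/(3√(1-2M/R)-1)`,
given the pressure-profile bound and `ζ ≤ ζ*`, for `2M/R < 8/9`. -/
theorem central_pressure_schwarzschild_bound
    (R M : ℝ) (hR : 0 < R) (hM : 0 ≤ M) (hMR : 2 * M / R < 8 / 9)
    (m p ζ : ℝ → ℝ)
    (hζc : 0 < ζ 0)
    (hζcont : ContinuousWithinAt ζ (Icc 0 R) 0)
    (hpcont : ContinuousWithinAt p (Icc 0 R) 0)
    (hm0 : Filter.Tendsto (fun r => m r / r) (nhdsWithin 0 (Ioc 0 R)) (nhds 0))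
    (hbound : ∀ r ∈ Ioc (0:ℝ) R,
      p r * ζ r ≥ (3 * M / (4 * π * R ^ 3) / 6) *
        (2 * Real.sqrt (1 - 2 * m r / r) + Real.sqrt (1 - 2 * M * r ^ 2 / R ^ 3)
          - 3 * Real.sqrt (1 - 2 * M / R)))
    (hζle : ∀ r ∈ Ioc (0:ℝ) R,
      ζ r ≤ (1 / 2) *
        (3 * Real.sqrt (1 - 2 * M / R) - Real.sqrt (1 - 2 * M * r ^ 2 / R ^ 3))) :
    p 0 ≥ (3 * M / (4 * π * R ^ 3)) *
      (1 - Real.sqrt (1 - 2 * M / R)) / (3 * Real.sqrt (1 - 2 * M / R) - 1) := by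
  set A : ℝ := 3 * M / (4 * π * R ^ 3) with hA
  set q : ℝ := Real.sqrt (1 - 2 * M / R) with hq
  have hMRpos : 2 * M / R ≥ 0 := by positivity
  have hs : (1:ℝ)/9 < 1 - 2 * M / R := by linarith
  have hq3 : 1/3 < q := by
    have : Real.sqrt (1/9) < q := by
      apply Real.sqrt_lt_sqrt (by norm_num) hs
    rwa [show (1:ℝ)/9 = (1/3)^2 by norm_num, Real.sqrt_sq (by norm_num)] at this
  have hq1 : q ≤ 1 := Real.sqrt_le_one.mpr (by linarith)
  have hA0 : 0 ≤ A := by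
    have := Real.pi_pos
    positivity
  have hL : (nhdsWithin (0:ℝ) (Ioc 0 R)).NeBot := left_nhdsWithin_Ioc_neBot hR
  set L := nhdsWithin (0:ℝ) (Ioc 0 R) with hLdef
  have hLle : L ≤ nhdsWithin 0 (Icc 0 R) :=
    nhdsWithin_mono _ Ioc_subset_Icc_self
  -- limits
  have hp0 : Filter.Tendsto p L (nhds (p 0)) := hpcont.mono_left hLle
  have hζ0 : Filter.Tendsto ζ L (nhds (ζ 0)) := hζcont.mono_left hLle
  have h1 : Filter.Tendsto (fun r => Real.sqrt (1 - 2 * m r / r)) L (nhds 1) := by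
    have : Filter.Tendsto (fun r => 1 - 2 * (m r / r)) L (nhds 1) := by
      have := hm0.const_mul 2
      have h2 := Filter.Tendsto.const_sub 1 this
      simpa using h2
    have hsq := (Real.continuous_sqrt.tendsto 1).comp this
    simpa [mul_div_assoc, Function.comp_def] using hsq
  have h2 : Filter.Tendsto (fun r : ℝ => Real.sqrt (1 - 2 * M * r ^ 2 / R ^ 3)) L (nhds 1) := by
    have hc : ContinuousAt (fun r : ℝ => Real.sqrt (1 - 2 * M * r ^ 2 / R ^ 3)) 0 := by
      apply Real.continuous_sqrt.continuousAt.comp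
      fun_prop
    have := hc.tendsto.mono_left (nhdsWithin_le_nhds (s := Ioc 0 R))
    simpa using this
  -- p 0 * ζ 0 ≥ (A/2)(1-q)
  have key1 : p 0 * ζ 0 ≥ A / 2 * (1 - q) := by
    have hT : Filter.Tendsto (fun r => (A / 6) *
        (2 * Real.sqrt (1 - 2 * m r / r) + Real.sqrt (1 - 2 * M * r ^ 2 / R ^ 3) - 3 * q))
        L (nhds ((A / 6) * (2 * 1 + 1 - 3 * q))) := by
      exact Filter.Tendsto.const_mul _ (((h1.const_mul 2).add h2).sub tendsto_const_nhds)
    have hge := le_of_tendsto_of_tendsto hT (hp0.mul hζ0)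
      (eventually_mem_nhdsWithin.mono fun r hr => hbound r hr)
    calc A / 2 * (1 - q) = (A / 6) * (2 * 1 + 1 - 3 * q) := by ring
      _ ≤ p 0 * ζ 0 := hge
  have key2 : ζ 0 ≤ (1 / 2) * (3 * q - 1) := by
    have hT : Filter.Tendsto (fun r : ℝ => (1/2) *
        (3 * q - Real.sqrt (1 - 2 * M * r ^ 2 / R ^ 3))) L (nhds ((1/2) * (3 * q - 1))) :=
      Filter.Tendsto.const_mul _ (Filter.Tendsto.const_sub _ h2)
    exact le_of_tendsto_of_tendsto hζ0 hT
      (eventually_mem_nhdsWithin.mono fun r hr => hζle r hr)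
  -- algebra
  have hζstar : 0 < (1/2) * (3 * q - 1) := by linarith
  have h1q : 0 ≤ 1 - q := by linarith
  have hnum : 0 ≤ A / 2 * (1 - q) := by positivity
  rw [ge_iff_le, mul_div_assoc]
  have e1 : A * ((1 - q) / (3 * q - 1)) = (A / 2 * (1 - q)) / ((1/2) * (3 * q - 1)) := by
    have : 3 * q - 1 ≠ 0 := by linarith
    field_simp
  rw [e1, show p 0 = (p 0 * ζ 0) / ζ 0 by field_simp]
  exact div_le_div₀ (le_trans hnum key1) key1 hζc key2
end

section
/- If ρ is nonincreasing on (0,R], p' = -(ρ+p)ζ'/ζ with ζ > 0 increasing, and ζ(R) = √(1-2M/R), then for all r ∈ (0,R]: (p(r)+ρ(r))·ζ(r) ≥ ρ_s·√(1-2M/R), where ρ_s = ρ(R) is the surface density. -/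
/-!
Along a solution of the conservation equation `p' = -(ρ + p) ζ'/ζ` the product rule gives
`((p + ρ) ζ)' = ρ' ζ`, which is `≤ 0` when `ρ` is nonincreasing and `ζ > 0`. Hence `(p + ρ) ζ`
is nonincreasing on `[0, R]`, so it is bounded below by its surface value `ρ(R) ζ(R)`.
-/

open Set Topology

theorem AntitoneOn.deriv_nonpos_of_mem_nhds {f : ℝ → ℝ} {s : Set ℝ} {x : ℝ}
    (hf : AntitoneOn f s) (hs : s ∈ 𝓝 x) : deriv f x ≤ 0 :=
  (derivWithin_of_mem_nhds hs).symm.trans_le hf.derivWithin_nonpos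

theorem hasDerivAt_add_mul_of_hydrostatic_equilibrium {p ρ ζ : ℝ → ℝ} {p' ρ' ζ' x : ℝ}
    (hp : HasDerivAt p p' x) (hρ : HasDerivAt ρ ρ' x) (hζ : HasDerivAt ζ ζ' x)
    (hζx : ζ x ≠ 0) (hcons : p' = -((ρ x + p x) * ζ' / ζ x)) :
    HasDerivAt (fun r => (p r + ρ r) * ζ r) (ρ' * ζ x) x := by
  refine ((hp.add hρ).mul hζ).congr_deriv ?_
  rw [hcons, Pi.add_apply]
  field_simp
  ring

theorem antitoneOn_add_mul_of_hydrostatic_equilibrium {a b : ℝ} {ρ p ζ : ℝ → ℝ}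
    (hρanti : AntitoneOn ρ (Ioo a b)) (hζpos : ∀ r ∈ Ioo a b, 0 < ζ r)
    (hcont : ContinuousOn (fun r => (p r + ρ r) * ζ r) (Icc a b))
    (hρdiff : ∀ r ∈ Ioo a b, DifferentiableAt ℝ ρ r)
    (hζdiff : ∀ r ∈ Ioo a b, DifferentiableAt ℝ ζ r)
    (hpdiff : ∀ r ∈ Ioo a b, DifferentiableAt ℝ p r)
    (hcons : ∀ r ∈ Ioo a b, deriv p r = -((ρ r + p r) * deriv ζ r / ζ r)) :
    AntitoneOn (fun r => (p r + ρ r) * ζ r) (Icc a b) := by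
  refine antitoneOn_of_hasDerivWithinAt_nonpos (f' := fun r => deriv ρ r * ζ r)
    (convex_Icc a b) hcont (fun r hr => ?_) (fun r hr => ?_) <;> rw [interior_Icc] at hr
  · exact (hasDerivAt_add_mul_of_hydrostatic_equilibrium (hpdiff r hr).hasDerivAt
      (hρdiff r hr).hasDerivAt (hζdiff r hr).hasDerivAt (hζpos r hr).ne'
      (hcons r hr)).hasDerivWithinAt
  · exact mul_nonpos_of_nonpos_of_nonneg
      (hρanti.deriv_nonpos_of_mem_nhds (Ioo_mem_nhds hr.1 hr.2)) (hζpos r hr).le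

theorem surface_density_bound_general
    (R M : ℝ) (ρ p ζ : ℝ → ℝ)
    (hρanti : AntitoneOn ρ (Ioc 0 R))
    (hζpos : ∀ r ∈ Ioc (0:ℝ) R, 0 < ζ r)
    (hζR : ζ R = Real.sqrt (1 - 2 * M / R))
    (hpR : p R = 0)
    (hcont : ContinuousOn (fun r => (p r + ρ r) * ζ r) (Icc 0 R))
    (hρdiff : ∀ r ∈ Ioo (0:ℝ) R, DifferentiableAt ℝ ρ r)
    (hζdiff : ∀ r ∈ Ioo (0:ℝ) R, DifferentiableAt ℝ ζ r)
    (hpdiff : ∀ r ∈ Ioo (0:ℝ) R, DifferentiableAt ℝ p r)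
    (hcons : ∀ r ∈ Ioo (0:ℝ) R,
      deriv p r = -((ρ r + p r) * deriv ζ r / ζ r)) :
    ∀ r ∈ Ioc (0:ℝ) R,
      (p r + ρ r) * ζ r ≥ ρ R * Real.sqrt (1 - 2 * M / R) := by
  intro r hr
  have hanti := antitoneOn_add_mul_of_hydrostatic_equilibrium
    (hρanti.mono Ioo_subset_Ioc_self) (fun r hr => hζpos r (Ioo_subset_Ioc_self hr))
    hcont hρdiff hζdiff hpdiff hcons
  have hsurface := hanti ⟨hr.1.le, hr.2⟩ ⟨hr.1.le.trans hr.2, le_rfl⟩ hr.2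
  simpa only [hpR, zero_add, hζR] using hsurface

/-- Surface-density bound: with `ρ` nonincreasing,
`(p(r)+ρ(r))ζ(r) ≥ ρ_s √(1-2M/R)` where `ρ_s = ρ(R)`. -/
theorem surface_density_bound
    (R M : ℝ) (hR : 0 < R) (ρ p ζ : ℝ → ℝ)
    (hρanti : AntitoneOn ρ (Ioc 0 R))
    (hζpos : ∀ r ∈ Ioc (0:ℝ) R, 0 < ζ r)
    (hζmono : MonotoneOn ζ (Ioc 0 R))
    (hζR : ζ R = Real.sqrt (1 - 2 * M / R))
    (hpR : p R = 0)
    (hcont : ContinuousOn (fun r => (p r + ρ r) * ζ r) (Icc 0 R))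
    (hρdiff : ∀ r ∈ Ioo (0:ℝ) R, DifferentiableAt ℝ ρ r)
    (hζdiff : ∀ r ∈ Ioo (0:ℝ) R, DifferentiableAt ℝ ζ r)
    (hpdiff : ∀ r ∈ Ioo (0:ℝ) R, DifferentiableAt ℝ p r)
    (hcons : ∀ r ∈ Ioo (0:ℝ) R,
      deriv p r = -((ρ r + p r) * deriv ζ r / ζ r)) :
    ∀ r ∈ Ioc (0:ℝ) R,
      (p r + ρ r) * ζ r ≥ ρ R * Real.sqrt (1 - 2 * M / R) :=
  surface_density_bound_general R M ρ p ζ hρanti hζpos hζR hpR hcont hρdiff hζdiff hpdiff hcons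
end

section
/- If p' = -(ρ+p)ζ'/ζ with ρ nonincreasing on (0,R], p nonincreasing with p(R)=0, ζ(0)=ζ_c > 0, then for all r: ζ_c·(ρ_c+p_c)/(ρ_c+p(r)) ≤ ζ(r) ≤ ζ_c·(ρ(r)+p_c)/(ρ(r)+p(r)); in particular √(1-2M/R) ≥ ζ_c(ρ_c+p_c)/ρ_c and √(1-2M/R) ≤ ζ_c(ρ_s+p_c)/ρ_s. -/
open Real Set

/-!
Along a solution of the equilibrium equation `p' = -(ρ + p) ζ' / ζ`, for every constant `c`

  `(ζ (c + p))' = ζ' c + ζ p' = ζ' (c - ρ)`,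

and `ζ' ≥ 0` because the pressure decreases. On `[0, r]` the antitone density satisfies
`ρ r ≤ ρ ≤ ρ 0`, so `ζ (ρ 0 + p)` increases and `ζ (ρ r + p)` decreases there; comparing their
values at `0` and `r` and dividing gives both bounds, which at the surface `p R = 0` become the
bounds on `√(1 - 2M/R)`.
-/

section Lapse

variable {ρ p ζ : ℝ → ℝ}

lemma HasDerivAt.lapse_mul_const_add_pressure {x c ζ' p' : ℝ} (hζ : HasDerivAt ζ ζ' x)
    (hp : HasDerivAt p p' x) (hζx : ζ x ≠ 0) (htov : p' = -((ρ x + p x) * ζ' / ζ x)) :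
    HasDerivAt (fun s => ζ s * (c + p s)) (ζ' * (c - ρ x)) x := by
  refine (hζ.mul (hp.const_add c)).congr_deriv ?_
  rw [htov]
  field_simp
  ring

lemma lapse_deriv_nonneg_of_antitoneOn {a b : ℝ} (hp : AntitoneOn p (Icc a b))
    (hζpos : ∀ x ∈ Ioo a b, 0 < ζ x) (hρp : ∀ x ∈ Ioo a b, 0 < ρ x + p x)
    (htov : ∀ x ∈ Ioo a b, deriv p x = -((ρ x + p x) * deriv ζ x / ζ x)) :
    ∀ x ∈ Ioo a b, 0 ≤ deriv ζ x := by
  intro x hx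
  have hp' : deriv p x ≤ 0 := by
    rw [← derivWithin_of_isOpen isOpen_Ioo hx]
    exact (hp.mono Ioo_subset_Icc_self).derivWithin_nonpos
  have hquot : 0 ≤ (ρ x + p x) * deriv ζ x / ζ x := by linarith [htov x hx]
  have hprod : 0 ≤ (ρ x + p x) * deriv ζ x := by
    simpa using (le_div_iff₀ (hζpos x hx)).1 hquot
  exact nonneg_of_mul_nonneg_right hprod (hρp x hx)

lemma lapse_mul_density_add_pressure_bounds {a r : ℝ} (har : a ≤ r) (hρ : AntitoneOn ρ (Icc a r))
    (hζc : ContinuousOn ζ (Icc a r)) (hpc : ContinuousOn p (Icc a r))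
    (hdiff : ∀ x ∈ Ioo a r, DifferentiableAt ℝ ζ x ∧ DifferentiableAt ℝ p x)
    (hζpos : ∀ x ∈ Ioo a r, 0 < ζ x) (hζ' : ∀ x ∈ Ioo a r, 0 ≤ deriv ζ x)
    (htov : ∀ x ∈ Ioo a r, deriv p x = -((ρ x + p x) * deriv ζ x / ζ x)) :
    ζ a * (ρ a + p a) ≤ ζ r * (ρ a + p r) ∧ ζ r * (ρ r + p r) ≤ ζ a * (ρ r + p a) := by
  have hcont : ∀ c, ContinuousOn (fun s => ζ s * (c + p s)) (Icc a r) := fun c =>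
    hζc.mul (continuousOn_const.add hpc)
  have hderiv : ∀ c, ∀ x ∈ interior (Icc a r), HasDerivWithinAt (fun s => ζ s * (c + p s))
      (deriv ζ x * (c - ρ x)) (interior (Icc a r)) x := by
    intro c x hx
    rw [interior_Icc] at hx ⊢
    exact ((hdiff x hx).1.hasDerivAt.lapse_mul_const_add_pressure (hdiff x hx).2.hasDerivAt
      (hζpos x hx).ne' (htov x hx)).hasDerivWithinAt
  have ha : a ∈ Icc a r := left_mem_Icc.2 har
  have hr : r ∈ Icc a r := right_mem_Icc.2 har
  constructor
  · refine monotoneOn_of_hasDerivWithinAt_nonneg (convex_Icc a r) (hcont _) (hderiv _) ?_ ha hr har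
    intro x hx
    rw [interior_Icc] at hx
    exact mul_nonneg (hζ' x hx) (sub_nonneg.2 (hρ ha (Ioo_subset_Icc_self hx) hx.1.le))
  · refine antitoneOn_of_hasDerivWithinAt_nonpos (convex_Icc a r) (hcont _) (hderiv _) ?_ ha hr har
    intro x hx
    rw [interior_Icc] at hx
    exact mul_nonpos_of_nonneg_of_nonpos (hζ' x hx)
      (sub_nonpos.2 (hρ (Ioo_subset_Icc_self hx) hr hx.2.le))

end Lapse

theorem lapse_two_sided_bound_general
    (R M : ℝ) (hR : 0 < R) (ρ p ζ : ℝ → ℝ)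
    (hρanti : AntitoneOn ρ (Icc 0 R))
    (hpanti : AntitoneOn p (Icc 0 R))
    (hρpos : ∀ r ∈ Icc (0:ℝ) R, 0 < ρ r)
    (hpR : p R = 0)
    (hζpos : ∀ r ∈ Icc (0:ℝ) R, 0 < ζ r)
    (hζR : ζ R = Real.sqrt (1 - 2 * M / R))
    (hcont : ContinuousOn ζ (Icc 0 R) ∧ ContinuousOn p (Icc 0 R) ∧
      ContinuousOn ρ (Icc 0 R))
    (hdiff : ∀ r ∈ Ioo (0:ℝ) R, DifferentiableAt ℝ ζ r ∧ DifferentiableAt ℝ p r)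
    (hcons : ∀ r ∈ Ioo (0:ℝ) R,
      deriv p r = -((ρ r + p r) * deriv ζ r / ζ r)) :
    (∀ r ∈ Icc (0:ℝ) R,
      ζ 0 * (ρ 0 + p 0) / (ρ 0 + p r) ≤ ζ r ∧
        ζ r ≤ ζ 0 * (ρ r + p 0) / (ρ r + p r)) ∧
    Real.sqrt (1 - 2 * M / R) ≥ ζ 0 * (ρ 0 + p 0) / ρ 0 ∧
    Real.sqrt (1 - 2 * M / R) ≤ ζ 0 * (ρ R + p 0) / ρ R := by
  obtain ⟨hζc, hpc, -⟩ := hcont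
  have hp_nonneg : ∀ r ∈ Icc 0 R, 0 ≤ p r := fun r hr =>
    hpR ▸ hpanti hr (right_mem_Icc.2 hR.le) hr.2
  have hρp : ∀ r ∈ Icc (0:ℝ) R, 0 < ρ r + p r := fun r hr =>
    add_pos_of_pos_of_nonneg (hρpos r hr) (hp_nonneg r hr)
  have hζ' := lapse_deriv_nonneg_of_antitoneOn hpanti
    (fun x hx => hζpos x (Ioo_subset_Icc_self hx)) (fun x hx => hρp x (Ioo_subset_Icc_self hx))
    hcons
  have h0 : (0:ℝ) ∈ Icc 0 R := left_mem_Icc.2 hR.le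
  have hbounds : ∀ r ∈ Icc (0:ℝ) R,
      ζ 0 * (ρ 0 + p 0) / (ρ 0 + p r) ≤ ζ r ∧ ζ r ≤ ζ 0 * (ρ r + p 0) / (ρ r + p r) := by
    intro r hr
    have hsub : Icc 0 r ⊆ Icc 0 R := Icc_subset_Icc_right hr.2
    have hsub' : Ioo 0 r ⊆ Ioo 0 R := Ioo_subset_Ioo_right hr.2
    obtain ⟨hlower, hupper⟩ := lapse_mul_density_add_pressure_bounds hr.1 (hρanti.mono hsub) (hζc.mono hsub)
      (hpc.mono hsub) (fun x hx => hdiff x (hsub' hx))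
      (fun x hx => hζpos x (Ioo_subset_Icc_self (hsub' hx))) (fun x hx => hζ' x (hsub' hx))
      (fun x hx => hcons x (hsub' hx))
    exact ⟨(div_le_iff₀ (add_pos_of_pos_of_nonneg (hρpos 0 h0) (hp_nonneg r hr))).2 hlower,
      (le_div_iff₀ (hρp r hr)).2 hupper⟩
  have hsurface := hbounds R (right_mem_Icc.2 hR.le)
  rw [hpR, add_zero, add_zero, hζR] at hsurface
  exact ⟨hbounds, hsurface.1, hsurface.2⟩

/-- Two-sided bound on the lapse in terms of the density and pressure profiles:
`ζ_c (ρ_c+p_c)/(ρ_c+p(r)) ≤ ζ(r) ≤ ζ_c (ρ(r)+p_c)/(ρ(r)+p(r))`, and at the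
surface `√(1-2M/R) ≥ ζ_c(ρ_c+p_c)/ρ_c` and `√(1-2M/R) ≤ ζ_c(ρ_s+p_c)/ρ_s`. -/
theorem lapse_two_sided_bound
    (R M : ℝ) (hR : 0 < R) (ρ p ζ : ℝ → ℝ)
    (hρanti : AntitoneOn ρ (Icc 0 R))
    (hpanti : AntitoneOn p (Icc 0 R))
    (hρpos : ∀ r ∈ Icc (0:ℝ) R, 0 < ρ r)
    (hppos : ∀ r ∈ Icc (0:ℝ) R, 0 ≤ p r)
    (hpR : p R = 0)
    (hζc : 0 < ζ 0)
    (hζpos : ∀ r ∈ Icc (0:ℝ) R, 0 < ζ r)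
    (hζR : ζ R = Real.sqrt (1 - 2 * M / R))
    (hcont : ContinuousOn ζ (Icc 0 R) ∧ ContinuousOn p (Icc 0 R) ∧
      ContinuousOn ρ (Icc 0 R))
    (hdiff : ∀ r ∈ Ioo (0:ℝ) R, DifferentiableAt ℝ ζ r ∧ DifferentiableAt ℝ p r)
    (hcons : ∀ r ∈ Ioo (0:ℝ) R,
      deriv p r = -((ρ r + p r) * deriv ζ r / ζ r)) :
    (∀ r ∈ Icc (0:ℝ) R,
      ζ 0 * (ρ 0 + p 0) / (ρ 0 + p r) ≤ ζ r ∧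
        ζ r ≤ ζ 0 * (ρ r + p 0) / (ρ r + p r)) ∧
    Real.sqrt (1 - 2 * M / R) ≥ ζ 0 * (ρ 0 + p 0) / ρ 0 ∧
    Real.sqrt (1 - 2 * M / R) ≤ ζ 0 * (ρ R + p 0) / ρ R :=
  lapse_two_sided_bound_general R M hR ρ p ζ hρanti hpanti hρpos hpR hζpos hζR hcont hdiff hcons
end

section
/- If ρ(r)+p(r) ≥ 0, ζ > 0, 2m(r)/r < 1, and (d/dr)[ζ(r)/√(1-2m(r)/r)] = 4πr·ζ(r)·(ρ+p)/(1-2m(r)/r)^{3/2} ≥ 0, with boundary ζ(R) = √(1-2M/R), then for all r ∈ (0,R]: ζ_c·√(1-2m(r)/r) ≤ ζ(r) ≤ √(1-2m(r)/r); equivalently ζ_c² ≤ |g_tt(r)|·g_rr(r) ≤ 1. -/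
open Real Set

/-- NEC bound on the metric components: `ζ_c √(1-2m(r)/r) ≤ ζ(r) ≤ √(1-2m(r)/r)`;
equivalently `ζ_c² ≤ |g_tt| g_rr = ζ²/(1-2m/r) ≤ 1`. -/
theorem nec_metric_bound
    (R M : ℝ) (hR : 0 < R) (m ρ p ζ : ℝ → ℝ) (hM : M = m R)
    (hm0 : m 0 = 0)
    (hζc : 0 < ζ 0)
    (hζpos : ∀ r ∈ Icc (0:ℝ) R, 0 < ζ r)
    (hcompact : ∀ r ∈ Ioc (0:ℝ) R, 2 * m r / r < 1)
    (hnec : ∀ r ∈ Ioo (0:ℝ) R, 0 ≤ ρ r + p r)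
    (hζR : ζ R = Real.sqrt (1 - 2 * M / R))
    (hcont : ContinuousOn (fun r => ζ r / Real.sqrt (1 - 2 * m r / r)) (Icc 0 R))
    (hderiv : ∀ r ∈ Ioo (0:ℝ) R,
      HasDerivAt (fun s => ζ s / Real.sqrt (1 - 2 * m s / s))
        (4 * π * r * ζ r * (ρ r + p r) / (1 - 2 * m r / r) ^ ((3:ℝ)/2)) r) :
    ∀ r ∈ Ioc (0:ℝ) R,
      (ζ 0 * Real.sqrt (1 - 2 * m r / r) ≤ ζ r ∧
        ζ r ≤ Real.sqrt (1 - 2 * m r / r)) ∧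
      (ζ 0 ^ 2 ≤ ζ r ^ 2 / (1 - 2 * m r / r) ∧
        ζ r ^ 2 / (1 - 2 * m r / r) ≤ 1) := by
  set f : ℝ → ℝ := fun s => ζ s / Real.sqrt (1 - 2 * m s / s) with hf
  have hint : interior (Icc (0:ℝ) R) = Ioo 0 R := interior_Icc
  have hmono : MonotoneOn f (Icc 0 R) := by
    apply monotoneOn_of_deriv_nonneg (convex_Icc 0 R) hcont
    · rw [hint]
      exact fun x hx => ((hderiv x hx).differentiableAt.differentiableWithinAt)
    · rw [hint]
      intro x hx
      rw [(hderiv x hx).deriv]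
      have hb : 0 < 1 - 2 * m x / x := by
        have := hcompact x ⟨hx.1, le_of_lt hx.2⟩; linarith
      have hpow : 0 < (1 - 2 * m x / x) ^ ((3:ℝ)/2) := Real.rpow_pos_of_pos hb _
      have hζx : 0 < ζ x := hζpos x ⟨le_of_lt hx.1, le_of_lt hx.2⟩
      have hx0 : 0 < x := hx.1
      have hnum : 0 ≤ 4 * π * x * ζ x * (ρ x + p x) :=
        mul_nonneg (by positivity) (hnec x hx)
      exact div_nonneg hnum hpow.le
  have hf0 : f 0 = ζ 0 := by
    simp [hf, hm0]
  have hbR : 0 < 1 - 2 * m R / R := by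
    have := hcompact R ⟨hR, le_refl R⟩; linarith
  have hfR : f R = 1 := by
    simp only [hf]
    rw [hζR, hM, div_self (ne_of_gt (Real.sqrt_pos.mpr hbR))]
  intro r hr
  have hrIcc : r ∈ Icc (0:ℝ) R := ⟨le_of_lt hr.1, hr.2⟩
  have hb : 0 < 1 - 2 * m r / r := by
    have := hcompact r hr; linarith
  have hs : 0 < Real.sqrt (1 - 2 * m r / r) := Real.sqrt_pos.mpr hb
  have hlow : ζ 0 ≤ f r := hf0 ▸ hmono ⟨le_refl 0, le_of_lt hR⟩ hrIcc hrIcc.1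
  have hhigh : f r ≤ 1 := hfR ▸ hmono hrIcc ⟨le_of_lt hR, le_refl R⟩ hr.2
  have hfr : f r = ζ r / Real.sqrt (1 - 2 * m r / r) := rfl
  rw [hfr] at hlow hhigh
  have h1 : ζ 0 * Real.sqrt (1 - 2 * m r / r) ≤ ζ r := by
    rw [le_div_iff₀ hs] at hlow; linarith
  have h2 : ζ r ≤ Real.sqrt (1 - 2 * m r / r) := by
    rw [div_le_one hs] at hhigh; exact hhigh
  refine ⟨⟨h1, h2⟩, ?_, ?_⟩
  · have hsq : (Real.sqrt (1 - 2 * m r / r)) ^ 2 = 1 - 2 * m r / r :=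
      Real.sq_sqrt (le_of_lt hb)
    rw [← hsq, le_div_iff₀ (by positivity)]
    nlinarith [mul_le_mul h1 h1 (mul_nonneg hζc.le hs.le)
      ((mul_nonneg hζc.le hs.le).trans h1)]
  · have hsq : (Real.sqrt (1 - 2 * m r / r)) ^ 2 = 1 - 2 * m r / r :=
      Real.sq_sqrt (le_of_lt hb)
    rw [div_le_one hb, ← hsq]
    have hζr : 0 < ζ r := hζpos r hrIcc
    nlinarith
end
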